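/- arXiv:0807.1713 — 11 statements merged into one kernel-verified Lean document; each statement's English description precedes it below -/
import Mathlib

section
/- Fix τ ∈ ℝ with 0 < τ < 1 and r > 0. Define K : ℕ → ℂ → ℂ → ℂ recursively by K 1 η η′ = 1/(η′ − τ·η) and K (n+1) η η′ = (2πi)⁻¹ ∮_{|ζ|=r} (K 1 η ζ)·(K n ζ η′) dζ. Then for every n ≥ 1, every η ∈ ℂ with |η| ≤ r and every η′ ∈ ℂ with |η′| = r, one has K n η η′ = 1/(η′ − τⁿ·η); consequently, for every n ≥ 1, (2πi)⁻¹ ∮_{|η|=r} K n η η dη = 1/(1 − τⁿ). -/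
/-!
The composition integral `∮ K₁(η, ζ) Kₙ(ζ, η') dζ` has integrand `(ζ - qη)⁻¹ (η' - qⁿζ)⁻¹`. Since
`‖qⁿζ‖ < r = ‖η'‖` on the closed disc, the second factor is holomorphic there, and Cauchy's
integral formula evaluates it at the pole `ζ = qη`, which turns `qⁿ` into `qⁿ⁺¹`. On the diagonal
`Kₙ(η, η) = (1 - qⁿ)⁻¹ η⁻¹`, whose integral is a residue at `0`.
-/

open Complex Real Metric Set

theorem two_pi_I_inv_mul_circleIntegral_inv_sub_mul_inv_sub {r : ℝ} {a p w : ℂ}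
    (ha : a ∈ ball (0 : ℂ) r) (hw : ‖p‖ * r < ‖w‖) :
    (2 * π * I)⁻¹ * ∮ ζ in C(0, r), (ζ - a)⁻¹ * (w - p * ζ)⁻¹ = (w - p * a)⁻¹ := by
  have hne : ∀ ζ ∈ closedBall (0 : ℂ) r, w - p * ζ ≠ 0 := by
    intro ζ hζ h
    rw [mem_closedBall_zero_iff] at hζ
    have : ‖w‖ ≤ ‖p‖ * r := by
      rw [sub_eq_zero.mp h, norm_mul]
      exact mul_le_mul_of_nonneg_left hζ (norm_nonneg p)
    exact this.not_gt hw
  have hd : DifferentiableOn ℂ (fun ζ => (w - p * ζ)⁻¹) (closedBall 0 r) :=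
    ((differentiable_const w).sub (differentiable_id.const_mul p)).differentiableOn.inv hne
  exact (hd.mono closure_ball_subset_closedBall).diffContOnCl
    |>.two_pi_i_inv_smul_circleIntegral_sub_inv_smul ha

theorem two_pi_I_inv_mul_circleIntegral_inv_sub_mul_self {r : ℝ} (hr : 0 < r) {c : ℂ}
    (hc : c ≠ 1) :
    (2 * π * I)⁻¹ * ∮ η in C(0, r), 1 / (η - c * η) = 1 / (1 - c) := by
  have hsub : 1 - c ≠ 0 := sub_ne_zero.mpr hc.symm
  have hintegrand : EqOn (fun η => 1 / (η - c * η)) (fun η => (1 - c)⁻¹ * (η - 0)⁻¹) (sphere 0 r) := by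
    intro η _
    simp only [one_div, sub_zero, ← mul_inv]
    ring_nf
  rw [circleIntegral.integral_congr hr.le hintegrand, circleIntegral.integral_const_mul,
    circleIntegral.integral_sub_inv_of_mem_ball (mem_ball_self hr)]
  field_simp

theorem kernel_pow_eq_one_div_sub {q : ℂ} (hq : ‖q‖ < 1) {r : ℝ} (hr : 0 < r)
    {K : ℕ → ℂ → ℂ → ℂ} (hK1 : ∀ η η' : ℂ, K 1 η η' = 1 / (η' - q * η))
    (hKrec : ∀ n : ℕ, 1 ≤ n → ∀ η η' : ℂ,
      K (n + 1) η η' = (2 * π * I)⁻¹ * ∮ ζ in C(0, r), K 1 η ζ * K n ζ η')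
    {n : ℕ} (hn : 1 ≤ n) {η η' : ℂ} (hη : ‖η‖ ≤ r) (hη' : ‖η'‖ = r) :
    K n η η' = 1 / (η' - q ^ n * η) := by
  induction n, hn using Nat.le_induction generalizing η with
  | base => simpa using hK1 η η'
  | succ m hm ih =>
    have hqη : q * η ∈ ball (0 : ℂ) r := by
      rw [mem_ball_zero_iff, norm_mul]
      calc ‖q‖ * ‖η‖ ≤ ‖q‖ * r := mul_le_mul_of_nonneg_left hη (norm_nonneg q)
        _ < r := mul_lt_of_lt_one_left hr hq
    have hqm : ‖q ^ m‖ * r < ‖η'‖ := by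
      rw [hη', norm_pow]
      exact mul_lt_of_lt_one_left hr
        (pow_lt_one₀ (norm_nonneg q) hq (Nat.one_le_iff_ne_zero.mp hm))
    have hintegrand : EqOn (fun ζ => K 1 η ζ * K m ζ η')
        (fun ζ => (ζ - q * η)⁻¹ * (η' - q ^ m * ζ)⁻¹) (sphere 0 r) := by
      intro ζ hζ
      rw [mem_sphere_zero_iff_norm] at hζ
      simp only [hK1, ih hζ.le, one_div]
    rw [hKrec m hm, circleIntegral.integral_congr hr.le hintegrand,
      two_pi_I_inv_mul_circleIntegral_inv_sub_mul_inv_sub hqη hqm, pow_succ, mul_assoc, one_div]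

/-- Powers of the kernel `K₀(η,η') = 1/(η' - τη)` and their traces
(Tracy–Widom, proof of Prop. 4): `K n η η' = 1/(η' - τⁿ η)` and
`tr K₀ⁿ = 1/(1 - τⁿ)`. -/
theorem stmt_2 (τ : ℝ) (hτ : 0 < τ) (hτ' : τ < 1) (r : ℝ) (hr : 0 < r)
    (K : ℕ → ℂ → ℂ → ℂ)
    (hK1 : ∀ η η' : ℂ, K 1 η η' = 1 / (η' - ↑τ * η))
    (hKrec : ∀ n : ℕ, 1 ≤ n → ∀ η η' : ℂ,
      K (n + 1) η η' =
        (2 * ↑Real.pi * Complex.I)⁻¹ * ∮ ζ in C(0, r), (K 1 η ζ) * (K n ζ η')) :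
    (∀ n : ℕ, 1 ≤ n → ∀ η : ℂ, ‖η‖ ≤ r → ∀ η' : ℂ, ‖η'‖ = r →
        K n η η' = 1 / (η' - (↑τ) ^ n * η)) ∧
    (∀ n : ℕ, 1 ≤ n →
        (2 * ↑Real.pi * Complex.I)⁻¹ * (∮ η in C(0, r), K n η η) =
          1 / (1 - (↑τ : ℂ) ^ n)) := by
  have hτnorm : ‖(τ : ℂ)‖ < 1 := by rwa [norm_real, norm_of_nonneg hτ.le]
  have hK : ∀ n : ℕ, 1 ≤ n → ∀ η : ℂ, ‖η‖ ≤ r → ∀ η' : ℂ, ‖η'‖ = r →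
      K n η η' = 1 / (η' - (↑τ) ^ n * η) := fun n hn η hη η' hη' =>
    kernel_pow_eq_one_div_sub hτnorm hr hK1 hKrec hn hη hη'
  refine ⟨hK, fun n hn => ?_⟩
  have hdiag : EqOn (fun η => K n η η) (fun η => 1 / (η - (τ : ℂ) ^ n * η)) (sphere 0 r) :=
    fun η hη => hK n hn η (mem_sphere_zero_iff_norm.mp hη).le η (mem_sphere_zero_iff_norm.mp hη)
  have hτn : (τ : ℂ) ^ n ≠ 1 := fun h =>
    (pow_lt_one₀ (norm_nonneg _) hτnorm (Nat.one_le_iff_ne_zero.mp hn)).ne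
      (by rw [← norm_pow, h, norm_one])
  rw [circleIntegral.integral_congr hr.le hdiag,
    two_pi_I_inv_mul_circleIntegral_inv_sub_mul_self hr hτn]
end

section
/- Fix τ, r ∈ ℝ with 0 < τ < 1 and 1 < r < τ⁻¹, fix x ∈ ℤ and t ∈ ℂ. Define φ(w) = ((1 − τw)/(1 − w))^x · exp((1/(1 − w) − 1/(1 − τw))·t) and φ_n(w) = ∏_{k=0}^{n−1} φ(τ^k·w). Define kernels K : ℕ → ℂ → ℂ → ℂ recursively by K 1 η η′ = φ(τη)/(η′ − τη) and K (n+1) η η′ = (2πi)⁻¹ ∮_{|ζ|=r} (K 1 η ζ)·(K n ζ η′) dζ. Then for every n ≥ 1, every η ∈ ℂ with |η| ≤ r and every η′ ∈ ℂ with |η′| = r, one has K n η η′ = φ_n(τη)/(η′ − τⁿ·η). -/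
open Complex Real Metric

/-!
Induction on `n`. In the inductive step the integrand is `φ(τη) (ζ - τη)⁻¹ g(ζ)` with
`g(ζ) = φ_n(τζ)/(η' - τⁿζ)` holomorphic on a neighbourhood of the closed disc `|ζ| ≤ r`:
`φ` is holomorphic on the unit disc and `τr < 1`, while `|τⁿζ| < r = |η'|`. Cauchy's integral
formula then evaluates the integral as `φ(τη) g(τη)`, and `φ(τη) φ_n(τ²η) = φ_{n+1}(τη)`.
-/

theorem differentiableAt_ratio_zpow_mul_cexp (τ t : ℂ) (x : ℤ) {w : ℂ} (hw : 1 - w ≠ 0)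
    (hτw : 1 - τ * w ≠ 0) :
    DifferentiableAt ℂ (fun w : ℂ => ((1 - τ * w) / (1 - w)) ^ x *
      exp ((1 / (1 - w) - 1 / (1 - τ * w)) * t)) w := by
  have hratio : DifferentiableAt ℂ (fun w : ℂ => (1 - τ * w) / (1 - w)) w :=
    (by fun_prop : DifferentiableAt ℂ (fun w : ℂ => 1 - τ * w) w).div (by fun_prop) hw
  refine (hratio.zpow (Or.inl (div_ne_zero hτw hw))).mul (DifferentiableAt.cexp ?_)
  refine DifferentiableAt.mul ?_ (differentiableAt_const t)
  exact ((differentiableAt_const 1).div (by fun_prop) hw).sub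
    ((differentiableAt_const 1).div (by fun_prop) hτw)

theorem one_sub_mul_ne_zero {τ w : ℂ} (hτ : ‖τ‖ ≤ 1) (hw : ‖w‖ < 1) : 1 - τ * w ≠ 0 := by
  refine sub_ne_zero.mpr fun h => ?_
  have : ‖τ * w‖ < 1 := by
    rw [norm_mul]
    exact (mul_le_of_le_one_left (norm_nonneg w) hτ).trans_lt hw
  simp [← h] at this

theorem differentiableOn_ratio_zpow_mul_cexp {τ : ℂ} (hτ : ‖τ‖ ≤ 1) (t : ℂ) (x : ℤ) :
    DifferentiableOn ℂ (fun w : ℂ => ((1 - τ * w) / (1 - w)) ^ x *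
      exp ((1 / (1 - w) - 1 / (1 - τ * w)) * t)) (ball 0 1) := fun w hw => by
  rw [mem_ball_zero_iff] at hw
  refine (differentiableAt_ratio_zpow_mul_cexp τ t x ?_ (one_sub_mul_ne_zero hτ hw))
    |>.differentiableWithinAt
  simpa using one_sub_mul_ne_zero (τ := 1) (by simp) hw

theorem differentiableOn_prod_comp_pow_mul {φ : ℂ → ℂ} (hφ : DifferentiableOn ℂ φ (ball 0 1))
    {τ : ℂ} (hτ : ‖τ‖ ≤ 1) (n : ℕ) :
    DifferentiableOn ℂ (fun w => ∏ k ∈ Finset.range n, φ (τ ^ k * w)) (ball 0 1) := by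
  refine DifferentiableOn.fun_finsetProd fun k _ => hφ.comp (by fun_prop) fun w hw => ?_
  rw [mem_ball_zero_iff] at hw ⊢
  rw [norm_mul, norm_pow]
  exact (mul_le_of_le_one_left (norm_nonneg w) (pow_le_one₀ (norm_nonneg τ) hτ)).trans_lt hw

theorem two_pi_I_inv_mul_circleIntegral_sub_inv_mul_comp_mul_div {ψ : ℂ → ℂ}
    (hψ : DifferentiableOn ℂ ψ (ball 0 1)) {τ q a b : ℂ} {r : ℝ} (hτ : ‖τ‖ * r < 1)
    (hq : ‖q‖ < 1) (ha : ‖a‖ < r) (hb : ‖b‖ = r) :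
    (2 * π * I)⁻¹ * ∮ ζ in C(0, r), (ζ - a)⁻¹ * (ψ (τ * ζ) / (b - q * ζ)) =
      ψ (τ * a) / (b - q * a) := by
  have hr : 0 < r := (norm_nonneg a).trans_lt ha
  have hg : DifferentiableOn ℂ (fun ζ => ψ (τ * ζ) / (b - q * ζ)) (closedBall 0 r) := by
    intro ζ hζ
    rw [mem_closedBall_zero_iff] at hζ
    have hτζ : τ * ζ ∈ ball 0 1 := by
      rw [mem_ball_zero_iff, norm_mul]
      exact (mul_le_mul_of_nonneg_left hζ (norm_nonneg τ)).trans_lt hτ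
    have hden : b - q * ζ ≠ 0 := by
      refine sub_ne_zero.mpr fun h => ?_
      have : ‖q * ζ‖ < r := by
        rw [norm_mul]
        calc ‖q‖ * ‖ζ‖ ≤ ‖q‖ * r := mul_le_mul_of_nonneg_left hζ (norm_nonneg q)
          _ < r := mul_lt_of_lt_one_left hr hq
      rw [← h, hb] at this
      exact this.false
    refine DifferentiableAt.differentiableWithinAt ?_
    exact ((hψ.differentiableAt (isOpen_ball.mem_nhds hτζ)).comp ζ (by fun_prop)).div
      (by fun_prop) hden
  simpa using (hg.diffContOnCl_ball subset_rfl).two_pi_i_inv_smul_circleIntegral_sub_inv_smul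
    (mem_ball_zero_iff.mpr ha)

/-- Proposition 5 of Tracy–Widom: the kernel of the n-th power of the operator
`K₁` with kernel `φ(τη)/(η' - τη)` is `φ_n(τη)/(η' - τⁿη)`, where
`φ_n(w) = ∏_{k=0}^{n-1} φ(τᵏ w)`. -/
theorem stmt_4 (τ r : ℝ) (hτ : 0 < τ) (hτ' : τ < 1)
    (hr : 1 < r) (hr' : r < τ⁻¹) (x : ℤ) (t : ℂ)
    (φ : ℂ → ℂ) (φn : ℕ → ℂ → ℂ)
    (hφ : ∀ w : ℂ, φ w = ((1 - ↑τ * w) / (1 - w)) ^ x *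
        Complex.exp ((1 / (1 - w) - 1 / (1 - ↑τ * w)) * t))
    (hφn : ∀ (n : ℕ) (w : ℂ), φn n w = ∏ k ∈ Finset.range n, φ ((↑τ : ℂ) ^ k * w))
    (K : ℕ → ℂ → ℂ → ℂ)
    (hK1 : ∀ η η' : ℂ, K 1 η η' = φ (↑τ * η) / (η' - ↑τ * η))
    (hKrec : ∀ n : ℕ, 1 ≤ n → ∀ η η' : ℂ,
      K (n + 1) η η' =
        (2 * ↑Real.pi * Complex.I)⁻¹ * ∮ ζ in C(0, r), (K 1 η ζ) * (K n ζ η')) :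
    ∀ n : ℕ, 1 ≤ n → ∀ η : ℂ, ‖η‖ ≤ r → ∀ η' : ℂ, ‖η'‖ = r →
      K n η η' = φn n (↑τ * η) / (η' - (↑τ : ℂ) ^ n * η) := by
  have hτn : ‖(τ : ℂ)‖ = τ := by simp [hτ.le]
  have hτr : τ * r < 1 := by simpa [hτ.ne'] using mul_lt_mul_of_pos_left hr' hτ
  have hτ1 : ‖(τ : ℂ)‖ ≤ 1 := hτn.trans_le hτ'.le
  have hφd : DifferentiableOn ℂ φ (ball 0 1) :=
    funext hφ ▸ differentiableOn_ratio_zpow_mul_cexp hτ1 t x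
  have hφnd (n : ℕ) : DifferentiableOn ℂ (φn n) (ball 0 1) :=
    funext (hφn n) ▸ differentiableOn_prod_comp_pow_mul hφd hτ1 n
  intro n hn
  induction n, hn using Nat.le_induction with
  | base => simp [hK1, hφn]
  | succ n hn IH =>
    intro η hη η' hη'
    have hτη : ‖(τ : ℂ) * η‖ < r := by
      rw [norm_mul, hτn]
      exact (mul_le_mul_of_nonneg_left hη hτ.le).trans_lt (mul_lt_of_lt_one_left (by linarith) hτ')
    have hτpow : ‖(τ : ℂ) ^ n‖ < 1 := by
      rw [norm_pow, hτn]
      exact pow_lt_one₀ hτ.le hτ' (by omega)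
    calc K (n + 1) η η'
        = φ (τ * η) * ((2 * π * I)⁻¹ * ∮ ζ in C(0, r),
            (ζ - τ * η)⁻¹ * (φn n (τ * ζ) / (η' - (τ : ℂ) ^ n * ζ))) := by
          rw [hKrec n hn, mul_left_comm, ← circleIntegral.integral_const_mul (φ _)]
          congr 1
          refine circleIntegral.integral_congr (by linarith) fun ζ hζ => ?_
          rw [hK1, IH ζ (mem_sphere_zero_iff_norm.mp hζ).le η' hη']
          ring
      _ = φ (τ * η) * (φn n (τ * (τ * η)) / (η' - (τ : ℂ) ^ n * (τ * η))) := by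
          rw [two_pi_I_inv_mul_circleIntegral_sub_inv_mul_comp_mul_div (hφnd n)
            (by rwa [hτn]) hτpow hτη hη']
      _ = φn (n + 1) (τ * η) / (η' - (τ : ℂ) ^ (n + 1) * η) := by
          simp only [hφn, Finset.prod_range_succ', pow_zero, one_mul, mul_assoc, pow_succ]
          ring
end

section
/- Let m, x ∈ ℤ with m ≥ 1 and x > m, let r ∈ ℝ with r > 1, and let t ∈ ℂ. Then ∮_{|ζ|=r} (1 − ζ)^{−x} · exp(t·ζ/(1 − ζ)) · ζ^{m−1} dζ = 0. -/
open Complex Real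

/-!
The integrand `f(ζ)` is holomorphic for `|ζ| > 1`, so its integral over `|ζ| = R` does not depend
on `R > 1`. Since `|ζ f(ζ)| → 0` as `ζ → ∞`, letting `R → ∞` shows that the integral vanishes.
The decay is seen through `w = (1 - ζ)⁻¹`: then `ζ f(ζ) = (w - 1)^m e^{t(w - 1)} w^{x - m}`,
which is continuous at `w = 0` and vanishes there because `x > m`.
-/

open Filter Topology Metric Bornology

theorem circleIntegral_eq_zero_of_differentiableAt_of_tendsto_cobounded
    {E : Type*} [NormedAddCommGroup E] [NormedSpace ℂ E] {c : ℂ} {r : ℝ} {f : ℂ → E}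
    (hr : 0 < r) (hd : ∀ z, r ≤ ‖z - c‖ → DifferentiableAt ℂ f z)
    (hlim : Tendsto (fun z ↦ (z - c) • f z) (cobounded ℂ) (𝓝 0)) :
    ∮ z in C(c, r), f z = 0 := by
  have radius_indep : ∀ R, r ≤ R → ∮ z in C(c, R), f z = ∮ z in C(c, r), f z := fun R hR ↦
    circleIntegral_eq_of_differentiable_on_annulus_off_countable hr hR Set.countable_empty
      (fun z hz ↦ (hd z (by simpa [dist_eq_norm] using hz.2)).continuousAt.continuousWithinAt)
      (fun z hz ↦ hd z (le_of_lt (by simpa [dist_eq_norm] using hz.1.2)))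
  refine norm_le_zero_iff.1 (le_of_forall_pos_le_add fun ε hε ↦ ?_)
  obtain ⟨R₀, -, hR₀⟩ := (hasBasis_cobounded_compl_closedBall c).eventually_iff.1
    (hlim.norm.eventually (ge_mem_nhds (by simpa using (by positivity : (0 : ℝ) < ε / (2 * π)))))
  set R := max r R₀ + 1
  have hR : 0 < R := by positivity
  have hbound : ∀ z ∈ sphere c R, ‖f z‖ ≤ ε / (2 * π) / R := by
    intro z hz
    have hzR : ‖z - c‖ = R := by simpa [dist_eq_norm] using hz
    have := hR₀ (by
      rw [Set.mem_compl_iff, mem_closedBall, dist_eq_norm, not_le, hzR]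
      linarith [le_max_right r R₀])
    rwa [norm_smul, hzR, ← le_div_iff₀' hR] at this
  calc ‖∮ z in C(c, r), f z‖ = ‖∮ z in C(c, R), f z‖ := by
        rw [radius_indep R (by linarith [le_max_left r R₀])]
    _ ≤ 2 * π * R * (ε / (2 * π) / R) :=
        circleIntegral.norm_integral_le_of_norm_le_const hR.le hbound
    _ = 0 + ε := by field_simp; ring

theorem tendsto_mul_one_sub_zpow_mul_exp_mul_zpow_cobounded {m x : ℤ} (hx : m < x) (t : ℂ) :
    Tendsto (fun ζ : ℂ ↦ ζ * ((1 - ζ) ^ (-x) * exp (t * ζ / (1 - ζ)) * ζ ^ (m - 1)))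
      (cobounded ℂ) (𝓝 0) := by
  set g : ℂ → ℂ := fun w ↦ (w - 1) ^ m * exp (t * (w - 1)) * w ^ (x - m)
  have hg : ContinuousAt g 0 := by
    fun_prop (disch := first | (right; omega) | (left; norm_num))
  have hg0 : g 0 = 0 := by simp [g, zero_zpow _ (sub_ne_zero.2 hx.ne')]
  have hw : Tendsto (fun ζ : ℂ ↦ (1 - ζ)⁻¹) (cobounded ℂ) (𝓝 0) :=
    tendsto_inv₀_cobounded.comp (tendsto_const_sub_cobounded 1)
  refine (hg0 ▸ hg.tendsto.comp hw).congr' ?_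
  filter_upwards [eventually_ne_cobounded 0, eventually_ne_cobounded 1] with ζ h0 h1
  have h1' : 1 - ζ ≠ 0 := sub_ne_zero.2 h1.symm
  have hsub : (1 - ζ)⁻¹ - 1 = ζ * (1 - ζ)⁻¹ := by field_simp; ring
  have hpow : (1 - ζ)⁻¹ ^ m * (1 - ζ)⁻¹ ^ (x - m) = (1 - ζ) ^ (-x) := by
    rw [← zpow_add₀ (inv_ne_zero h1'), add_sub_cancel, inv_zpow']
  have hζ : ζ * ζ ^ (m - 1) = ζ ^ m := by
    rw [zpow_sub_one₀ h0, mul_comm, inv_mul_cancel_right₀ h0]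
  simp only [Function.comp_apply, g, hsub, mul_zpow]
  rw [← hpow, ← hζ, mul_div_assoc, div_eq_mul_inv]
  ring

theorem stmt_6_general (m x : ℤ) (hx : m < x) (r : ℝ) (hr : 1 < r) (t : ℂ) :
    (∮ ζ in C(0, r),
        (1 - ζ) ^ (-x) * Complex.exp (t * ζ / (1 - ζ)) * ζ ^ (m - 1)) = 0 := by
  refine circleIntegral_eq_zero_of_differentiableAt_of_tendsto_cobounded (one_pos.trans hr)
    (fun ζ hζ ↦ ?_) (by simpa using tendsto_mul_one_sub_zpow_mul_exp_mul_zpow_cobounded hx t)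
  rw [sub_zero] at hζ
  have h0 : ζ ≠ 0 := by rintro rfl; rw [norm_zero] at hζ; linarith
  have h1 : 1 - ζ ≠ 0 := by rw [sub_ne_zero]; rintro rfl; rw [norm_one] at hζ; linarith
  fun_prop (disch := exact Or.inl ‹_›)

/-- Vanishing contour integral (Tracy–Widom, proof of Theorem 1):
`∮_{|ζ|=r} (1-ζ)^{-x} e^{tζ/(1-ζ)} ζ^{m-1} dζ = 0` when `x > m ≥ 1`. -/
theorem stmt_6 (m x : ℤ) (hm : 1 ≤ m) (hx : m < x) (r : ℝ) (hr : 1 < r) (t : ℂ) :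
    (∮ ζ in C(0, r),
        (1 - ζ) ^ (-x) * Complex.exp (t * ζ / (1 - ζ)) * ζ ^ (m - 1)) = 0 :=
  stmt_6_general m x hx r hr t
end

section
/- Let m, x ∈ ℤ with 1 ≤ x ≤ m, let r ∈ ℝ with r > 1, and let t ∈ ℂ. Then (2πi)⁻¹ ∮_{|ζ|=r} (1 − ζ)^{−x} · exp(t·ζ/(1 − ζ)) · ζ^{m−1} dζ = e^{−t} · ∑_{j=0}^{m−x} (−1)^{x+j} · C(m−1, x+j−1) · t^j/j!, where C(·,·) denotes the binomial coefficient. In particular the integral equals e^{−t} times a polynomial in t of degree m − x with leading coefficient (−1)^m/(m−x)!. -/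
/-!
On the circle `|ζ| = r > 1` we have `tζ/(1-ζ) = -t + t/(1-ζ)`, so the integrand is `e^{-t}` times
`ζ^{m-1} (1-ζ)^{-x} exp(t/(1-ζ))`. Expanding the exponential and integrating termwise (the series
converges uniformly on the circle), the `k`-th term is `t^k/k!` times the residue at `1` of
`ζ^{m-1} (1-ζ)^{-(x+k)}`, which the binomial expansion of `ζ^{m-1} = ((ζ-1) + 1)^{m-1}` gives as
`(-1)^{x+k} C(m-1, x+k-1)`. It vanishes once `x + k > m`, so the series is a polynomial in `t`.
-/

open Complex Real

open Metric Filter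

namespace circleIntegral

section Residues

variable {c a : ℂ} {R : ℝ}

theorem integral_sub_zpow_of_mem_ball (ha : a ∈ ball c R) (n : ℤ) :
    (∮ z in C(c, R), (z - a) ^ n) = if n = -1 then 2 * π * I else 0 := by
  split_ifs with hn
  · simpa [hn, zpow_neg_one] using integral_sub_inv_of_mem_ball ha
  · exact integral_sub_zpow_of_ne hn c a R

/-- For `Q > N` the truncated exponent `N - Q` is harmless, since `N.choose Q = 0`. -/
theorem integral_pow_div_sub_pow_succ (ha : a ∈ ball c R) (N Q : ℕ) :
    (∮ z in C(c, R), z ^ N / (z - a) ^ (Q + 1)) = 2 * π * I * N.choose Q * a ^ (N - Q) := by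
  have hR : 0 ≤ R := (pos_of_mem_ball ha).le
  have hsub : ∀ z ∈ sphere c R, z - a ≠ 0 := fun z hz =>
    sub_ne_zero.2 (sphere_disjoint_ball.ne_of_mem hz ha)
  have hexpand : Set.EqOn (fun z => z ^ N / (z - a) ^ (Q + 1))
      (fun z => ∑ i ∈ Finset.range (N + 1),
        a ^ (N - i) * N.choose i * (z - a) ^ ((i : ℤ) - (Q + 1 : ℕ))) (sphere c R) := by
    intro z hz
    have hbinom := add_pow (z - a) a N
    rw [sub_add_cancel] at hbinom
    simp only [hbinom, Finset.sum_div]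
    refine Finset.sum_congr rfl fun i _ => ?_
    rw [zpow_sub₀ (hsub z hz), zpow_natCast, zpow_natCast]
    ring
  have hint : ∀ i ∈ Finset.range (N + 1), CircleIntegrable
      (fun z => a ^ (N - i) * N.choose i * (z - a) ^ ((i : ℤ) - (Q + 1 : ℕ))) c R :=
    fun i _ => (continuousOn_const.mul ((continuousOn_id.sub continuousOn_const).zpow₀ _
      fun z hz => Or.inl (hsub z hz))).circleIntegrable hR
  have hresidue : ∀ i : ℕ, ((i : ℤ) - (Q + 1 : ℕ) = -1) ↔ Q = i := by omega
  rw [integral_congr hR hexpand, integral_fun_sum hint]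
  simp only [integral_const_mul, integral_sub_zpow_of_mem_ball ha, mul_ite, mul_zero, hresidue,
    Finset.sum_ite_eq, Finset.mem_range]
  split_ifs with hQ
  · ring
  · rw [Nat.choose_eq_zero_of_lt (by omega)]
    simp

theorem integral_pow_div_sub_pow_succ' (ha : a ∈ ball c R) (N Q : ℕ) :
    (∮ z in C(c, R), z ^ N / (a - z) ^ (Q + 1)) =
      (-1) ^ (Q + 1) * (2 * π * I * N.choose Q * a ^ (N - Q)) := by
  have hsign : ∀ z : ℂ,
      z ^ N / (a - z) ^ (Q + 1) = (-1) ^ (Q + 1) * (z ^ N / (z - a) ^ (Q + 1)) := by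
    intro z
    rw [show a - z = -1 * (z - a) by ring]
    simp only [mul_pow, div_eq_mul_inv, mul_inv, ← inv_pow, inv_neg_one]
    ring
  simp_rw [hsign, integral_const_mul, integral_pow_div_sub_pow_succ ha]

end Residues

section TermwiseIntegration

variable {E : Type*} [NormedAddCommGroup E] [NormedSpace ℂ E] [CompleteSpace E] {c : ℂ} {R : ℝ}

theorem hasSum_integral_of_norm_le {ι : Type*} [Countable ι] {F : ι → ℂ → E} {u : ι → ℝ}
    (hR : 0 ≤ R) (hF : ∀ i, ContinuousOn (F i) (sphere c R)) (hu : Summable u)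
    (hFu : ∀ i, ∀ z ∈ sphere c R, ‖F i z‖ ≤ u i) :
    HasSum (fun i => ∮ z in C(c, R), F i z) (∮ z in C(c, R), ∑' i, F i z) := by
  have hlim := (tendstoUniformlyOn_tsum hu hFu).tendsto_circleIntegral_of_continuousOn hR
    (Eventually.of_forall fun s => continuousOn_finsetSum s fun i _ => hF i)
  exact hlim.congr fun s => integral_fun_sum fun i _ => (hF i).circleIntegrable hR

theorem hasSum_integral_mul_exp {g h : ℂ → ℂ} (hR : 0 ≤ R) (hg : ContinuousOn g (sphere c R))
    (hh : ContinuousOn h (sphere c R)) :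
    HasSum (fun k : ℕ => ∮ z in C(c, R), g z * h z ^ k / k.factorial)
      (∮ z in C(c, R), g z * exp (h z)) := by
  obtain ⟨G, hG⟩ := (isCompact_sphere c R).exists_bound_of_continuousOn hg
  obtain ⟨H, hH⟩ := (isCompact_sphere c R).exists_bound_of_continuousOn hh
  have hexp : ∀ z, HasSum (fun k : ℕ => g z * h z ^ k / k.factorial) (g z * exp (h z)) := by
    intro z
    simpa only [← exp_eq_exp_ℂ, ← mul_div_assoc] using
      (NormedSpace.expSeries_div_hasSum_exp (h z)).mul_left (g z)
  have hbound : ∀ k : ℕ, ∀ z ∈ sphere c R,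
      ‖g z * h z ^ k / k.factorial‖ ≤ G * (H ^ k / k.factorial) := by
    intro k z hz
    rw [norm_div, norm_mul, norm_pow, Complex.norm_natCast, mul_div_assoc]
    gcongr
    · exact (norm_nonneg _).trans (hG z hz)
    · exact hG z hz
    · exact hH z hz
  have hsum := hasSum_integral_of_norm_le (F := fun k z => g z * h z ^ k / k.factorial) hR
    (fun k => (hg.mul (hh.pow k)).div_const _) ((Real.summable_pow_div_factorial H).mul_left G)
    hbound
  rwa [integral_congr hR fun z _ => (hexp z).tsum_eq] at hsum

end TermwiseIntegration

theorem integral_pow_div_one_sub_pow_mul_exp {r : ℝ} (hr : 1 < r) (X M : ℕ) (t : ℂ) :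
    (∮ ζ in C(0, r), ζ ^ (X + M) / (1 - ζ) ^ (X + 1) * exp (t / (1 - ζ))) =
      2 * π * I * ∑ k ∈ Finset.range (M + 1),
        (-1) ^ (X + 1 + k) * (X + M).choose (X + k) * t ^ k / k.factorial := by
  have h1 : (1 : ℂ) ∈ ball 0 r := by simpa using hr
  have hne : ∀ ζ ∈ sphere (0 : ℂ) r, 1 - ζ ≠ 0 := fun ζ hζ =>
    sub_ne_zero.2 (sphere_disjoint_ball.ne_of_mem hζ h1).symm
  have hterm : ∀ k : ℕ, (∮ ζ in C(0, r), ζ ^ (X + M) / (1 - ζ) ^ (X + 1) * (t / (1 - ζ)) ^ k /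
      k.factorial) = 2 * π * I * ((-1) ^ (X + 1 + k) * (X + M).choose (X + k) * t ^ k /
        k.factorial) := by
    intro k
    have hcollect : (fun ζ : ℂ => ζ ^ (X + M) / (1 - ζ) ^ (X + 1) * (t / (1 - ζ)) ^ k /
        k.factorial) = fun ζ => t ^ k / k.factorial * (ζ ^ (X + M) / (1 - ζ) ^ (X + k + 1)) := by
      funext ζ
      generalize 1 - ζ = w
      ring
    rw [hcollect, integral_const_mul, integral_pow_div_sub_pow_succ' h1, one_pow]
    ring
  have hseries := hasSum_integral_mul_exp (g := fun ζ => ζ ^ (X + M) / (1 - ζ) ^ (X + 1))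
    (h := fun ζ => t / (1 - ζ)) (by linarith)
    ((continuousOn_pow (X + M)).div ((continuousOn_const.sub continuousOn_id).pow (X + 1))
      fun ζ hζ => pow_ne_zero _ (hne ζ hζ))
    (continuousOn_const.div (continuousOn_const.sub continuousOn_id) hne)
  simp only [hterm] at hseries
  refine hseries.unique ((hasSum_sum_of_ne_finset_zero fun k hk => ?_).mul_left _)
  rw [Finset.mem_range, not_lt] at hk
  simp [Nat.choose_eq_zero_of_lt (show X + M < X + k by omega)]

end circleIntegral

theorem Complex.exp_mul_div_one_sub {z : ℂ} (hz : 1 - z ≠ 0) (t : ℂ) :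
    exp (t * z / (1 - z)) = exp (-t) * exp (t / (1 - z)) := by
  rw [← Complex.exp_add]
  congr 1
  field_simp
  ring

/-- Explicit residue evaluation (Tracy–Widom, proof of Theorem 1):
`(2πi)⁻¹ ∮_{|ζ|=r} (1-ζ)^{-x} e^{tζ/(1-ζ)} ζ^{m-1} dζ
  = e^{-t} ∑_{j=0}^{m-x} (-1)^{x+j} C(m-1, x+j-1) tʲ/j!` for `1 ≤ x ≤ m`. -/
theorem stmt_7 (m x : ℤ) (hx : 1 ≤ x) (hxm : x ≤ m) (r : ℝ) (hr : 1 < r) (t : ℂ) :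
    (2 * ↑Real.pi * Complex.I)⁻¹ *
      (∮ ζ in C(0, r),
        (1 - ζ) ^ (-x) * Complex.exp (t * ζ / (1 - ζ)) * ζ ^ (m - 1)) =
      Complex.exp (-t) *
        ∑ j ∈ Finset.range ((m - x).toNat + 1),
          (-1 : ℂ) ^ (x + (j : ℤ)) *
            (Nat.choose (m - 1).toNat (x + (j : ℤ) - 1).toNat : ℂ) *
            t ^ j / (Nat.factorial j : ℂ) := by
  obtain ⟨X, rfl⟩ : ∃ X : ℕ, x = X + 1 := ⟨(x - 1).toNat, by omega⟩
  obtain ⟨M, rfl⟩ : ∃ M : ℕ, m = X + 1 + M := ⟨(m - (X + 1)).toNat, by omega⟩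
  have hintegrand : Set.EqOn
      (fun ζ => (1 - ζ) ^ (-((X : ℤ) + 1)) * exp (t * ζ / (1 - ζ)) * ζ ^ ((X : ℤ) + 1 + M - 1))
      (fun ζ => exp (-t) * (ζ ^ (X + M) / (1 - ζ) ^ (X + 1) * exp (t / (1 - ζ)))) (sphere 0 r) := by
    intro ζ hζ
    have hζ1 : (1 : ℂ) - ζ ≠ 0 := sub_ne_zero.2 (sphere_disjoint_ball.ne_of_mem hζ
      (by simpa using hr : (1 : ℂ) ∈ ball 0 r)).symm
    dsimp only
    rw [exp_mul_div_one_sub hζ1, show (X : ℤ) + 1 + M - 1 = ((X + M : ℕ) : ℤ) by push_cast; ring,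
      show (X : ℤ) + 1 = ((X + 1 : ℕ) : ℤ) by push_cast; ring, zpow_neg, zpow_natCast, zpow_natCast]
    ring
  rw [circleIntegral.integral_congr (by linarith) hintegrand, circleIntegral.integral_const_mul,
    circleIntegral.integral_pow_div_one_sub_pow_mul_exp hr, mul_left_comm,
    inv_mul_cancel_left₀ two_pi_I_ne_zero,
    show ((X : ℤ) + 1 + M - (X + 1)).toNat = M by omega]
  refine congrArg _ (Finset.sum_congr rfl fun j _ => ?_)
  rw [show ((X : ℤ) + 1 + M - 1).toNat = X + M by omega,
    show ((X : ℤ) + 1 + j - 1).toNat = X + j by omega,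
    show (X : ℤ) + 1 + j = ((X + 1 + j : ℕ) : ℤ) by push_cast; ring, zpow_natCast]
end

section
/- Let τ, r ∈ ℝ with 0 < τ < 1 and 1 < r < τ⁻¹, and let η ∈ ℂ with |η| = r. Then Re(1/(1 − η) − 1/(1 − τ·η)) ≤ 1/(1 + r) − 1/(1 + τ·r), and moreover 1/(1 + r) − 1/(1 + τ·r) < 0. -/
/-!
If `‖w‖ = s` then `Re(1/(1-w)) - 1/(1+s) = (1-s)(s + Re w) / (|1-w|²(1+s))` with `s + Re w ≥ 0`.
Hence `Re(1/(1-w)) ≤ 1/(1+s)` on circles of radius `s > 1` and `≥ 1/(1+s)` on circles of radius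
`s < 1`; apply this to `w = η` and to `w = τη`, whose radius `τr` is less than `1`.
-/

open Complex

namespace Complex

variable {w : ℂ} {s : ℝ}

theorem normSq_one_sub_of_norm_eq (hw : ‖w‖ = s) : normSq (1 - w) = 1 - 2 * w.re + s ^ 2 := by
  rw [← hw, ← normSq_eq_norm_sq, normSq_apply, normSq_apply]
  simp only [sub_re, one_re, sub_im, one_im]
  ring

theorem re_one_div_one_sub_sub_one_div_one_add (hw : ‖w‖ = s) (hw1 : w ≠ 1) :
    (1 / (1 - w)).re - 1 / (1 + s) = (1 - s) * (s + w.re) / (normSq (1 - w) * (1 + s)) := by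
  have hs : 1 + s ≠ 0 := by linarith [hw ▸ norm_nonneg w]
  have hD : normSq (1 - w) ≠ 0 := (normSq_pos.2 (sub_ne_zero.2 hw1.symm)).ne'
  rw [one_div, inv_re, sub_re, one_re, div_sub_div _ _ hD hs, normSq_one_sub_of_norm_eq hw]
  ring

theorem neg_le_re_of_norm_eq (hw : ‖w‖ = s) : -s ≤ w.re :=
  hw ▸ neg_le_of_abs_le (abs_re_le_norm w)

theorem re_one_div_one_sub_le_of_one_lt (hw : ‖w‖ = s) (hs : 1 < s) :
    (1 / (1 - w)).re ≤ 1 / (1 + s) := by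
  have hw1 : w ≠ 1 := by rintro rfl; rw [norm_one] at hw; linarith
  have hdiff : (1 - s) * (s + w.re) / (normSq (1 - w) * (1 + s)) ≤ 0 :=
    div_nonpos_of_nonpos_of_nonneg
      (mul_nonpos_of_nonpos_of_nonneg (by linarith) (by linarith [neg_le_re_of_norm_eq hw]))
      (mul_nonneg (normSq_nonneg _) (by linarith))
  linarith [re_one_div_one_sub_sub_one_div_one_add hw hw1]

theorem le_re_one_div_one_sub_of_lt_one (hw : ‖w‖ = s) (hs : s < 1) :
    1 / (1 + s) ≤ (1 / (1 - w)).re := by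
  have hw1 : w ≠ 1 := by rintro rfl; rw [norm_one] at hw; linarith
  have hs0 : 0 ≤ s := hw ▸ norm_nonneg w
  have hdiff : 0 ≤ (1 - s) * (s + w.re) / (normSq (1 - w) * (1 + s)) :=
    div_nonneg (mul_nonneg (by linarith) (by linarith [neg_le_re_of_norm_eq hw]))
      (mul_nonneg (normSq_nonneg _) (by linarith))
  linarith [re_one_div_one_sub_sub_one_div_one_add hw hw1]

end Complex

theorem stmt_10_general (τ r : ℝ) (hτ : 0 < τ) (hr : 1 < r) (hr' : r < τ⁻¹)
    (η : ℂ) (hη : ‖η‖ = r) :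
    (1 / (1 - η) - 1 / (1 - ↑τ * η)).re ≤ 1 / (1 + r) - 1 / (1 + τ * r) ∧
    1 / (1 + r) - 1 / (1 + τ * r) < 0 := by
  have hτr : τ * r < 1 := (lt_inv_mul_iff₀ hτ).1 (by rwa [mul_one])
  have hτη : ‖(τ : ℂ) * η‖ = τ * r := by rw [norm_mul, Complex.norm_of_nonneg hτ.le, hη]
  refine ⟨?_, sub_neg.2 (one_div_lt_one_div_of_lt (by positivity) (by linarith))⟩
  rw [sub_re]
  linarith [re_one_div_one_sub_le_of_one_lt hη hr, le_re_one_div_one_sub_of_lt_one hτη hτr]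

/-- Key estimate in the proof of Theorem 1 of Tracy–Widom:
on the circle `|η| = r` with `1 < r < τ⁻¹`,
`Re(1/(1-η) - 1/(1-τη)) ≤ 1/(1+r) - 1/(1+τr) < 0`. -/
theorem stmt_10 (τ r : ℝ) (hτ : 0 < τ) (hτ' : τ < 1) (hr : 1 < r) (hr' : r < τ⁻¹)
    (η : ℂ) (hη : ‖η‖ = r) :
    (1 / (1 - η) - 1 / (1 - ↑τ * η)).re ≤ 1 / (1 + r) - 1 / (1 + τ * r) ∧
    1 / (1 + r) - 1 / (1 + τ * r) < 0 :=
  stmt_10_general τ r hτ hr hr' η hη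
end

section
/- Let τ, r ∈ ℝ with 0 < τ < 1 and 1 < r < τ⁻¹, and let x ∈ ℤ. Set δ = 1/(1 + τ·r) − 1/(1 + r). Then δ > 0, and there exists a constant C > 0 such that for every real t ≥ 0 and every η ∈ ℂ with |η| = r, |((1 − τη)/(1 − η))^x · exp((1/(1 − η) − 1/(1 − τη))·t)| ≤ C·e^{−δ·t}. -/
/-!
For `‖w‖ = s` one has `Re (1 / (1 - w)) - 1 / (1 + s) = (1 - s) (s + Re w) / ((1 + s) |1 - w|²)`,
which is `≤ 0` when `s > 1` and `≥ 0` when `s < 1`. Applied to `w = η` and to `w = τη`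
(of modulus `τr < 1`), this bounds the real part of the exponent by `-δ` on the whole circle,
so the exponential factor is at most `e^{-δt}` for `t ≥ 0`. By the triangle inequality the
modulus of `(1 - τη) / (1 - η)` stays in `[(1 - τr) / (1 + r), (1 + τr) / (r - 1)]`, a compact
subset of `(0, ∞)`, so its `x`-th power is bounded uniformly.
-/

open Complex

lemma normSq_one_sub (w : ℂ) : normSq (1 - w) = 1 - 2 * w.re + ‖w‖ ^ 2 := by
  rw [normSq_sub, ← normSq_eq_norm_sq]
  simp only [map_one, one_mul, conj_re]
  ring

lemma one_div_one_add_norm_le_re_inv_one_sub {w : ℂ} (hw : ‖w‖ < 1) :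
    1 / (1 + ‖w‖) ≤ (1 - w)⁻¹.re := by
  have hre : -‖w‖ ≤ w.re := neg_le_of_abs_le (abs_re_le_norm w)
  have hpos : 0 < normSq (1 - w) := by
    rw [normSq_one_sub]; nlinarith [abs_re_le_norm w, le_abs_self w.re]
  rw [inv_re, sub_re, one_re, div_le_div_iff₀ (by positivity) hpos, normSq_one_sub]
  nlinarith [mul_nonneg (sub_nonneg.2 hw.le) (neg_le_iff_add_nonneg.1 hre)]

lemma re_inv_one_sub_le_one_div_one_add_norm {w : ℂ} (hw : 1 < ‖w‖) :
    (1 - w)⁻¹.re ≤ 1 / (1 + ‖w‖) := by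
  have hre : -‖w‖ ≤ w.re := neg_le_of_abs_le (abs_re_le_norm w)
  have hpos : 0 < normSq (1 - w) := by
    rw [normSq_one_sub]; nlinarith [abs_re_le_norm w, le_abs_self w.re]
  rw [inv_re, sub_re, one_re, div_le_div_iff₀ hpos (by positivity), normSq_one_sub]
  nlinarith [mul_nonneg (sub_nonneg.2 hw.le) (neg_le_iff_add_nonneg.1 hre)]

lemma norm_ofReal_mul {τ : ℝ} (hτ : 0 ≤ τ) (η : ℂ) : ‖(τ : ℂ) * η‖ = τ * ‖η‖ := by
  rw [norm_mul, norm_real, Real.norm_of_nonneg hτ]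

lemma re_one_div_one_sub_sub_le {τ : ℝ} {η : ℂ} (hτ : 0 ≤ τ) (hη : 1 < ‖η‖)
    (hτη : τ * ‖η‖ < 1) :
    (1 / (1 - η) - 1 / (1 - τ * η)).re ≤ 1 / (1 + ‖η‖) - 1 / (1 + τ * ‖η‖) := by
  have h₁ := re_inv_one_sub_le_one_div_one_add_norm hη
  have h₂ :=
    one_div_one_add_norm_le_re_inv_one_sub (w := τ * η) (by rwa [norm_ofReal_mul hτ])
  rw [norm_ofReal_mul hτ] at h₂
  simp only [one_div, sub_re] at h₁ h₂ ⊢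
  linarith

lemma norm_one_sub_le (w : ℂ) : ‖1 - w‖ ≤ 1 + ‖w‖ := by
  simpa using norm_sub_le (1 : ℂ) w

lemma abs_one_sub_norm_le (w : ℂ) : |1 - ‖w‖| ≤ ‖1 - w‖ := by
  simpa using abs_norm_sub_norm_le (1 : ℂ) w

lemma norm_div_one_sub_mem_Icc {τ : ℝ} {η : ℂ} (hτ : 0 ≤ τ) (hη : 1 < ‖η‖)
    (hτη : τ * ‖η‖ < 1) :
    ‖(1 - τ * η) / (1 - η)‖ ∈
      Set.Icc ((1 - τ * ‖η‖) / (1 + ‖η‖)) ((1 + τ * ‖η‖) / (‖η‖ - 1)) := by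
  have hnum₁ := norm_one_sub_le (τ * η)
  have hnum₂ := abs_one_sub_norm_le (τ * η)
  have hden₁ := norm_one_sub_le η
  have hden₂ := abs_one_sub_norm_le η
  rw [norm_ofReal_mul hτ] at hnum₁ hnum₂
  rw [abs_of_pos (by linarith)] at hnum₂
  rw [abs_of_neg (by linarith), neg_sub] at hden₂
  have hden_pos : 0 < ‖1 - η‖ := by linarith
  rw [norm_div]
  constructor <;> gcongr

lemma zpow_le_max_of_mem_Icc {m M ρ : ℝ} (hm : 0 < m) (hρ : ρ ∈ Set.Icc m M) (n : ℤ) :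
    ρ ^ n ≤ max (m ^ n) (M ^ n) := by
  rcases le_total 0 n with hn | hn
  · exact le_max_of_le_right (zpow_le_zpow_left₀ hn (hm.le.trans hρ.1) hρ.2)
  · refine le_max_of_le_left ?_
    rw [← neg_neg n, ← inv_zpow', ← inv_zpow' m]
    exact zpow_le_zpow_left₀ (neg_nonneg.2 hn) (by have := hm.trans_le hρ.1; positivity)
      (inv_anti₀ hm hρ.1)

/-- Uniform estimate `φ(η) = O(e^{-δt})` on the circle `|η| = r`
(Tracy–Widom, proof of Theorem 1). -/
theorem stmt_11 (τ r : ℝ) (hτ : 0 < τ) (hτ' : τ < 1) (hr : 1 < r) (hr' : r < τ⁻¹)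
    (x : ℤ) (δ : ℝ) (hδdef : δ = 1 / (1 + τ * r) - 1 / (1 + r)) :
    0 < δ ∧
    ∃ C : ℝ, 0 < C ∧ ∀ t : ℝ, 0 ≤ t → ∀ η : ℂ, ‖η‖ = r →
      ‖((1 - ↑τ * η) / (1 - η)) ^ x *
          Complex.exp ((1 / (1 - η) - 1 / (1 - ↑τ * η)) * (t : ℂ))‖ ≤
        C * Real.exp (-δ * t) := by
  have hτr : τ * r < 1 := by
    simpa [hτ.ne'] using mul_lt_mul_of_pos_left hr' hτ
  subst hδdef
  refine ⟨sub_pos.2 (one_div_lt_one_div_of_lt (by positivity) (by nlinarith)), ?_⟩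
  have hm : 0 < (1 - τ * r) / (1 + r) := div_pos (by linarith) (by linarith)
  refine ⟨max (((1 - τ * r) / (1 + r)) ^ x) (((1 + τ * r) / (r - 1)) ^ x),
    lt_max_of_lt_left (zpow_pos hm x), fun t ht η hη => ?_⟩
  subst hη
  rw [norm_mul, norm_zpow, norm_exp, re_mul_ofReal]
  have hexponent := re_one_div_one_sub_sub_le hτ.le hr hτr
  gcongr
  · exact zpow_le_max_of_mem_Icc hm (norm_div_one_sub_mem_Icc hτ.le hr hτr) x
  · linarith
end

section
/- Let τ ∈ ℝ with 0 < τ < 1 and let μ ∈ ℂ with μ ≠ 0 and τ^k·μ ≠ 1 for every k ∈ ℤ. Then for every z ∈ ℂ with 1 < |z| < τ⁻¹, the doubly infinite series f(μ, z) = ∑_{k∈ℤ} τ^k·z^k/(1 − τ^k·μ) converges absolutely; moreover the function z ↦ f(μ, z) is complex-differentiable on the open annulus {z : 1 < |z| < τ⁻¹}. -/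
/-!
Write the `k`-th term as `a k * z ^ k` with `a k = τᵏ / (1 - τᵏ μ)`. For `k = n ≥ 0` the
denominators tend to `1`, and for `k = -n` one has `a k = (τⁿ - μ)⁻¹` with `τⁿ - μ → -μ ≠ 0`;
so `‖a n‖ ≤ C τⁿ` and `‖a (-n)‖ ≤ C`. The Laurent series is then dominated by two geometric
series on the annulus, and since `x ↦ xᵏ` is convex on `(0, ∞)`, on a thinner annulus
`s ≤ ‖z‖ ≤ t` each term is bounded by its values at the radii `s` and `t`. This summable
majorant makes the sum holomorphic.
-/

open Complex Filter Set Topology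

theorem exists_norm_inv_le_of_tendsto {𝕜 : Type*} [NormedDivisionRing 𝕜] {g : ℕ → 𝕜} {L : 𝕜}
    (h : Tendsto g atTop (𝓝 L)) (hL : L ≠ 0) : ∃ C, ∀ n, ‖(g n)⁻¹‖ ≤ C := by
  obtain ⟨C, hC⟩ := (h.inv₀ hL).norm.bddAbove_range
  exact ⟨C, fun n => hC ⟨n, rfl⟩⟩

theorem zpow_le_add_of_mem_Icc {s t x : ℝ} (hs : 0 < s) (hx : x ∈ Icc s t) (k : ℤ) :
    x ^ k ≤ s ^ k + t ^ k := by
  have ht : 0 < t := hs.trans_le (hx.1.trans hx.2)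
  exact ((convexOn_zpow k).le_max_of_mem_Icc hs ht hx).trans
    (max_le_add_of_nonneg (zpow_nonneg hs.le k) (zpow_nonneg ht.le k))

section Laurent

variable {E : Type*} [SeminormedAddCommGroup E] {C ρ r x : ℝ}

theorem summable_norm_mul_zpow_of_le_geometric {a : ℤ → E}
    (hpos : ∀ n : ℕ, ‖a n‖ ≤ C * ρ ^ n) (hneg : ∀ n : ℕ, ‖a (-n)‖ ≤ C * r ^ n)
    (hr : 0 ≤ r) (hrx : r < x) (hxρ : x < ρ⁻¹) :
    Summable fun k : ℤ => ‖a k‖ * x ^ k := by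
  have hx : 0 < x := hr.trans_lt hrx
  have hρ : 0 < ρ := inv_pos.mp (hx.trans hxρ)
  have hρx : ρ * x < 1 := by simpa [hρ.ne'] using mul_lt_mul_of_pos_left hxρ hρ
  refine Summable.of_nat_of_neg ?_ ?_
  · refine Summable.of_nonneg_of_le (fun n => by positivity) (fun n => ?_)
      ((summable_geometric_of_lt_one (by positivity) hρx).mul_left C)
    calc ‖a n‖ * x ^ (n : ℤ) ≤ C * ρ ^ n * x ^ n := by
          rw [zpow_natCast]; gcongr; exact hpos n
      _ = C * (ρ * x) ^ n := by ring
  · refine Summable.of_nonneg_of_le (fun n => by positivity) (fun n => ?_)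
      ((summable_geometric_of_lt_one (by positivity) ((div_lt_one hx).mpr hrx)).mul_left C)
    calc ‖a (-n)‖ * x ^ (-(n : ℤ)) ≤ C * r ^ n * (x ^ n)⁻¹ := by
          rw [zpow_neg, zpow_natCast]; gcongr; exact hneg n
      _ = C * (r / x) ^ n := by rw [div_pow]; ring

theorem differentiableOn_tsum_mul_zpow_of_le_geometric {a : ℤ → ℂ}
    (hpos : ∀ n : ℕ, ‖a n‖ ≤ C * ρ ^ n) (hneg : ∀ n : ℕ, ‖a (-n)‖ ≤ C * r ^ n) (hr : 0 ≤ r) :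
    DifferentiableOn ℂ (fun z => ∑' k : ℤ, a k * z ^ k) {z : ℂ | r < ‖z‖ ∧ ‖z‖ < ρ⁻¹} := by
  rintro z₀ ⟨hrz₀, hz₀ρ⟩
  obtain ⟨s, hrs, hsz₀⟩ := exists_between hrz₀
  obtain ⟨t, hz₀t, htρ⟩ := exists_between hz₀ρ
  have hs : 0 < s := hr.trans_lt hrs
  let U := {z : ℂ | s < ‖z‖ ∧ ‖z‖ < t}
  have hU : IsOpen U :=
    (isOpen_lt continuous_const continuous_norm).inter (isOpen_lt continuous_norm continuous_const)
  have hmajorant : Summable fun k : ℤ => ‖a k‖ * s ^ k + ‖a k‖ * t ^ k :=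
    (summable_norm_mul_zpow_of_le_geometric hpos hneg hr hrs (hsz₀.trans (hz₀t.trans htρ))).add
      (summable_norm_mul_zpow_of_le_geometric hpos hneg hr (hrs.trans (hsz₀.trans hz₀t)) htρ)
  have hterm : ∀ k : ℤ, DifferentiableOn ℂ (fun z => a k * z ^ k) U := fun k z hz =>
    ((differentiableAt_zpow.mpr (Or.inl (norm_pos_iff.mp (hs.trans hz.1)))).const_mul
      _).differentiableWithinAt
  have hbound : ∀ (k : ℤ) (z : ℂ), z ∈ U → ‖a k * z ^ k‖ ≤ ‖a k‖ * s ^ k + ‖a k‖ * t ^ k := by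
    intro k z hz
    rw [norm_mul, norm_zpow, ← mul_add]
    exact mul_le_mul_of_nonneg_left (zpow_le_add_of_mem_Icc hs ⟨hz.1.le, hz.2.le⟩ k)
      (norm_nonneg _)
  exact ((differentiableOn_tsum_of_summable_norm hmajorant hterm hU hbound).differentiableAt
    (hU.mem_nhds ⟨hsz₀, hz₀t⟩)).differentiableWithinAt

end Laurent

theorem exists_norm_zpow_div_one_sub_zpow_mul_le {𝕜 : Type*} [NormedField 𝕜] {q μ : 𝕜}
    (hq : q ≠ 0) (hq1 : ‖q‖ < 1) (hμ : μ ≠ 0) :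
    ∃ C, (∀ n : ℕ, ‖q ^ (n : ℤ) / (1 - q ^ (n : ℤ) * μ)‖ ≤ C * ‖q‖ ^ n) ∧
      ∀ n : ℕ, ‖q ^ (-n : ℤ) / (1 - q ^ (-n : ℤ) * μ)‖ ≤ C := by
  have hpow : Tendsto (fun n : ℕ => q ^ n) atTop (𝓝 0) :=
    tendsto_pow_atTop_nhds_zero_of_norm_lt_one hq1
  obtain ⟨C₁, hC₁⟩ := exists_norm_inv_le_of_tendsto
    (by simpa using tendsto_const_nhds.sub (hpow.mul_const μ) : Tendsto
      (fun n : ℕ => 1 - q ^ n * μ) atTop (𝓝 1)) one_ne_zero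
  obtain ⟨C₂, hC₂⟩ := exists_norm_inv_le_of_tendsto (hpow.sub_const μ)
    (by simpa using hμ : (0 : 𝕜) - μ ≠ 0)
  refine ⟨max C₁ C₂, fun n => ?_, fun n => ?_⟩
  · rw [zpow_natCast, div_eq_mul_inv, norm_mul, norm_pow, mul_comm]
    exact mul_le_mul_of_nonneg_right ((hC₁ n).trans (le_max_left _ _)) (by positivity)
  · have hqn : q ^ n ≠ 0 := pow_ne_zero n hq
    -- `q⁻ⁿ / (1 - q⁻ⁿ μ) = (qⁿ - μ)⁻¹`, also when `qⁿ = μ`, where both sides are `0`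
    rw [zpow_neg, zpow_natCast, show 1 - (q ^ n)⁻¹ * μ = (q ^ n)⁻¹ * (q ^ n - μ) by
      field_simp, div_mul_cancel_left₀ (inv_ne_zero hqn)]
    exact (hC₂ n).trans (le_max_right _ _)

theorem stmt_12_general (τ : ℝ) (hτ : 0 < τ) (hτ' : τ < 1) (μ : ℂ) (hμ : μ ≠ 0) :
    (∀ z : ℂ, 1 < ‖z‖ → ‖z‖ < τ⁻¹ →
      Summable (fun k : ℤ =>
        ‖(↑τ : ℂ) ^ k * z ^ k / (1 - (↑τ : ℂ) ^ k * μ)‖)) ∧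
    DifferentiableOn ℂ
      (fun z : ℂ => ∑' k : ℤ, (↑τ : ℂ) ^ k * z ^ k / (1 - (↑τ : ℂ) ^ k * μ))
      {z : ℂ | 1 < ‖z‖ ∧ ‖z‖ < τ⁻¹} := by
  have hτ_norm : ‖(τ : ℂ)‖ = τ := by simp [abs_of_pos hτ]
  obtain ⟨C, hpos, hneg⟩ := exists_norm_zpow_div_one_sub_zpow_mul_le
    (ofReal_ne_zero.mpr hτ.ne') (by rwa [hτ_norm]) hμ
  rw [hτ_norm] at hpos
  replace hneg : ∀ n : ℕ, _ ≤ C * 1 ^ n := fun n => (hneg n).trans_eq (by rw [one_pow, mul_one])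
  simp_rw [mul_div_right_comm _ (_ ^ _)]
  refine ⟨fun z h1 h2 => ?_, differentiableOn_tsum_mul_zpow_of_le_geometric hpos hneg zero_le_one⟩
  simpa only [norm_mul, norm_zpow] using
    summable_norm_mul_zpow_of_le_geometric hpos hneg zero_le_one h1 h2

/-- Absolute convergence and analyticity of
`f(μ,z) = ∑_{k∈ℤ} τᵏ zᵏ/(1 - τᵏ μ)` on the annulus `1 < |z| < τ⁻¹`
(Tracy–Widom, Section V). -/
theorem stmt_12 (τ : ℝ) (hτ : 0 < τ) (hτ' : τ < 1) (μ : ℂ) (hμ : μ ≠ 0)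
    (hμ' : ∀ k : ℤ, (↑τ : ℂ) ^ k * μ ≠ 1) :
    (∀ z : ℂ, 1 < ‖z‖ → ‖z‖ < τ⁻¹ →
      Summable (fun k : ℤ =>
        ‖(↑τ : ℂ) ^ k * z ^ k / (1 - (↑τ : ℂ) ^ k * μ)‖)) ∧
    DifferentiableOn ℂ
      (fun z : ℂ => ∑' k : ℤ, (↑τ : ℂ) ^ k * z ^ k / (1 - (↑τ : ℂ) ^ k * μ))
      {z : ℂ | 1 < ‖z‖ ∧ ‖z‖ < τ⁻¹} :=
  stmt_12_general τ hτ hτ' μ hμ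
end

section
/- Let τ ∈ ℝ with 0 < τ < 1, let μ ∈ ℂ with μ ≠ 0 and τ^k·μ ≠ 1 for every k ∈ ℤ, and let ρ ∈ ℝ with 1 < ρ < τ⁻¹. Then there exists a constant C > 0 such that for every z ∈ ℂ with 1 < |z| ≤ ρ, |f(μ, z) − μ⁻¹/(1 − z)| ≤ C, where f(μ, z) = ∑_{k∈ℤ} τ^k·z^k/(1 − τ^k·μ). -/
/-!
Split the sum at `k = 0`. Since `q ^ n → 0`, the factors `(1 - q ^ n * ν)⁻¹`, for `ν = μ` and
`ν = μ⁻¹`, form convergent, hence bounded, sequences, so the terms with `k ≥ 0` are dominated by the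
geometric series in `‖q‖ * ρ < 1`. For `k = -m < 0` the term equals `-μ⁻¹ * z⁻¹ ^ m` plus a term of
the same shape with `μ⁻¹` in place of `μ` and `q * z⁻¹` in place of `q * z`, dominated by a
geometric series in `‖q‖`. The series `∑_{m ≥ 1} -μ⁻¹ * z⁻¹ ^ m` sums to `μ⁻¹ / (1 - z)`, which is
the singular part.
-/

open Filter Topology

section

variable {𝕜 : Type*} [NormedField 𝕜]

lemma exists_pos_forall_norm_inv_one_sub_pow_mul_le {q : 𝕜} (hq : ‖q‖ < 1) (ν : 𝕜) :
    ∃ B, 0 < B ∧ ∀ n : ℕ, ‖(1 - q ^ n * ν)⁻¹‖ ≤ B := by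
  have hlim : Tendsto (fun n : ℕ ↦ (1 - q ^ n * ν)⁻¹) atTop (𝓝 1) := by
    simpa using ((tendsto_pow_atTop_nhds_zero_of_norm_lt_one hq).mul_const ν).const_sub 1
      |>.inv₀ (by simp)
  obtain ⟨B, hB⟩ := hlim.norm.bddAbove_range
  exact ⟨max B 1, by positivity, fun n ↦ (hB ⟨n, rfl⟩).trans (le_max_left _ _)⟩

lemma exists_hasSum_norm_le_of_norm_le_geometric {E : Type*} [NormedAddCommGroup E]
    [CompleteSpace E] {f : ℕ → E} {C r : ℝ} (hr₀ : 0 ≤ r) (hr₁ : r < 1)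
    (hf : ∀ n, ‖f n‖ ≤ C * r ^ n) : ∃ s, HasSum f s ∧ ‖s‖ ≤ C / (1 - r) := by
  have hg : HasSum (fun n ↦ C * r ^ n) (C / (1 - r)) := by
    simpa [div_eq_mul_inv] using (hasSum_geometric_of_lt_one hr₀ hr₁).mul_left C
  have hs : Summable f := .of_norm_bounded hg.summable hf
  exact ⟨_, hs.hasSum, hs.hasSum.norm_le_of_bounded hg hf⟩

lemma hasSum_neg_inv_mul_inv_pow_succ {z : 𝕜} (hz : 1 < ‖z‖) (μ : 𝕜) :
    HasSum (fun n : ℕ ↦ -μ⁻¹ * z⁻¹ ^ (n + 1)) (μ⁻¹ / (1 - z)) := by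
  have hz₀ : z ≠ 0 := norm_pos_iff.mp (by linarith)
  have hgeom := hasSum_geometric_of_norm_lt_one (ξ := z⁻¹)
    (by simpa using inv_lt_one_of_one_lt₀ hz)
  have hz₁ : 1 - z ≠ 0 := sub_ne_zero.mpr fun h ↦ by simp [← h] at hz
  have hsum : -μ⁻¹ * z⁻¹ * (1 - z⁻¹)⁻¹ = μ⁻¹ / (1 - z) := by
    rw [show 1 - z⁻¹ = -(1 - z) / z by field_simp; ring]
    field_simp
  simpa only [hsum, pow_succ', mul_assoc] using hgeom.mul_left (-μ⁻¹ * z⁻¹)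

lemma zpow_neg_mul_zpow_neg_div_one_sub {q μ : 𝕜} (z : 𝕜) (hq : q ≠ 0) (hμ : μ ≠ 0) {m : ℕ}
    (hm : q ^ (-m : ℤ) * μ ≠ 1) :
    q ^ (-m : ℤ) * z ^ (-m : ℤ) / (1 - q ^ (-m : ℤ) * μ) =
      -μ⁻¹ * z⁻¹ ^ m - μ⁻¹ ^ 2 * (q * z⁻¹) ^ m / (1 - q ^ m * μ⁻¹) := by
  have hqm : q ^ m ≠ 0 := pow_ne_zero m hq
  have hden : q ^ m - μ ≠ 0 := by
    rw [sub_ne_zero]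
    rintro rfl
    simp [zpow_neg, zpow_natCast, hqm] at hm
  have hden' : μ - q ^ m ≠ 0 := fun h ↦ hden (by linear_combination -h)
  simp only [zpow_neg, zpow_natCast, mul_pow, inv_pow]
  generalize (z ^ m)⁻¹ = w
  field_simp
  ring

lemma hasSum_zpow_div_one_sub {q μ z s₁ s₂ : 𝕜} (hq : q ≠ 0) (hμ : μ ≠ 0)
    (hμ' : ∀ k : ℤ, q ^ k * μ ≠ 1) (hz : 1 < ‖z‖)
    (hs₁ : HasSum (fun n : ℕ ↦ (q * z) ^ n / (1 - q ^ n * μ)) s₁)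
    (hs₂ : HasSum (fun n : ℕ ↦ -(μ⁻¹ ^ 2 * (q * z⁻¹) ^ (n + 1) / (1 - q ^ (n + 1) * μ⁻¹))) s₂) :
    HasSum (fun k : ℤ ↦ q ^ k * z ^ k / (1 - q ^ k * μ)) (s₁ + (μ⁻¹ / (1 - z) + s₂)) := by
  refine HasSum.of_nat_of_neg_add_one ?_ ?_
  · simpa only [zpow_natCast, mul_pow] using hs₁
  · refine ((hasSum_neg_inv_mul_inv_pow_succ hz μ).add hs₂).congr_fun fun n ↦ ?_
    have := zpow_neg_mul_zpow_neg_div_one_sub z hq hμ (hμ' _) (m := n + 1)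
    push_cast at this
    rw [this, sub_eq_add_neg]

theorem exists_norm_tsum_zpow_div_one_sub_sub_le [CompleteSpace 𝕜] {q μ : 𝕜} (hq₀ : q ≠ 0)
    (hq : ‖q‖ < 1) (hμ : μ ≠ 0) (hμ' : ∀ k : ℤ, q ^ k * μ ≠ 1) {ρ : ℝ} (hρ : ‖q‖ * ρ < 1) :
    ∃ C, 0 < C ∧ ∀ z : 𝕜, 1 < ‖z‖ → ‖z‖ ≤ ρ →
      ‖(∑' k : ℤ, q ^ k * z ^ k / (1 - q ^ k * μ)) - μ⁻¹ / (1 - z)‖ ≤ C := by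
  obtain ⟨B, hB, hBμ⟩ := exists_pos_forall_norm_inv_one_sub_pow_mul_le hq μ
  obtain ⟨B', hB', hBμ'⟩ := exists_pos_forall_norm_inv_one_sub_pow_mul_le hq μ⁻¹
  refine ⟨B / (1 - ‖q‖ * ρ) + ‖μ⁻¹‖ ^ 2 * B' * ‖q‖ / (1 - ‖q‖), ?_, fun z hz hzρ ↦ ?_⟩
  · have : 0 < 1 - ‖q‖ * ρ := by linarith
    have : 0 < 1 - ‖q‖ := by linarith
    positivity
  have hqz : 0 ≤ ‖q‖ * ρ := mul_nonneg (norm_nonneg q) ((norm_nonneg z).trans hzρ)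
  obtain ⟨s₁, hs₁, hs₁le⟩ := exists_hasSum_norm_le_of_norm_le_geometric
      (f := fun n : ℕ ↦ (q * z) ^ n / (1 - q ^ n * μ)) hqz hρ fun n ↦ by
    rw [norm_div, norm_pow, norm_mul, div_eq_mul_inv, ← norm_inv, mul_comm]
    exact mul_le_mul (hBμ n) (by gcongr) (by positivity) hB.le
  obtain ⟨s₂, hs₂, hs₂le⟩ := exists_hasSum_norm_le_of_norm_le_geometric
      (f := fun n : ℕ ↦ -(μ⁻¹ ^ 2 * (q * z⁻¹) ^ (n + 1) / (1 - q ^ (n + 1) * μ⁻¹)))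
      (norm_nonneg q) hq fun n ↦ by
    have hz' : ‖z⁻¹‖ ≤ 1 := by simpa using (inv_lt_one_of_one_lt₀ hz).le
    calc ‖-(μ⁻¹ ^ 2 * (q * z⁻¹) ^ (n + 1) / (1 - q ^ (n + 1) * μ⁻¹))‖
        = ‖μ⁻¹‖ ^ 2 * (‖q‖ * ‖z⁻¹‖) ^ (n + 1) * ‖(1 - q ^ (n + 1) * μ⁻¹)⁻¹‖ := by
          rw [norm_neg, norm_div, norm_mul, norm_pow, norm_pow, norm_mul, norm_inv (1 - _),
            div_eq_mul_inv]
      _ ≤ ‖μ⁻¹‖ ^ 2 * (‖q‖ * 1) ^ (n + 1) * B' := by gcongr; exact hBμ' _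
      _ = ‖μ⁻¹‖ ^ 2 * B' * ‖q‖ * ‖q‖ ^ n := by ring
  rw [(hasSum_zpow_div_one_sub hq₀ hμ hμ' hz hs₁ hs₂).tsum_eq,
    show s₁ + (μ⁻¹ / (1 - z) + s₂) - μ⁻¹ / (1 - z) = s₁ + s₂ by ring]
  exact (norm_add_le _ _).trans (add_le_add hs₁le hs₂le)

end

theorem stmt_13_general (τ : ℝ) (hτ : 0 < τ) (hτ' : τ < 1) (μ : ℂ) (hμ : μ ≠ 0)
    (hμ' : ∀ k : ℤ, (↑τ : ℂ) ^ k * μ ≠ 1) (ρ : ℝ) (hρ' : ρ < τ⁻¹) :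
    ∃ C : ℝ, 0 < C ∧ ∀ z : ℂ, 1 < ‖z‖ → ‖z‖ ≤ ρ →
      ‖(∑' k : ℤ, (↑τ : ℂ) ^ k * z ^ k / (1 - (↑τ : ℂ) ^ k * μ)) -
          μ⁻¹ / (1 - z)‖ ≤ C := by
  have hnorm : ‖(τ : ℂ)‖ = τ := by simp [hτ.le]
  refine exists_norm_tsum_zpow_div_one_sub_sub_le (mod_cast hτ.ne') (by rwa [hnorm]) hμ hμ' ?_
  rw [hnorm]
  exact (lt_inv_mul_iff₀ hτ).mp (by rwa [mul_one])

/-- `f(μ,z) = μ⁻¹/(1-z) + O(1)` for `1 < |z| ≤ ρ`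
(Tracy–Widom, proof of Theorem 3). -/
theorem stmt_13 (τ : ℝ) (hτ : 0 < τ) (hτ' : τ < 1) (μ : ℂ) (hμ : μ ≠ 0)
    (hμ' : ∀ k : ℤ, (↑τ : ℂ) ^ k * μ ≠ 1) (ρ : ℝ) (hρ : 1 < ρ) (hρ' : ρ < τ⁻¹) :
    ∃ C : ℝ, 0 < C ∧ ∀ z : ℂ, 1 < ‖z‖ → ‖z‖ ≤ ρ →
      ‖(∑' k : ℤ, (↑τ : ℂ) ^ k * z ^ k / (1 - (↑τ : ℂ) ^ k * μ)) -
          μ⁻¹ / (1 - z)‖ ≤ C :=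
  stmt_13_general τ hτ hτ' μ hμ hμ' ρ hρ'
end

section
/- Let τ, r ∈ ℝ with 0 < τ < 1 and 1 < r < τ⁻¹, let x ∈ ℤ, and let j ∈ ℕ. Then there exists a polynomial P in two variables with complex coefficients (depending on τ, x, j) such that for every t ∈ ℂ and every η ∈ ℂ with |η| < r/τ, (2πi)⁻¹ ∮_{|ζ|=r} (1 − ζ)^{−x} · exp(t·ζ/(1 − ζ)) · ζ^j/(ζ − τ·η) dζ = e^{−t} · P(t, η). -/
open Complex Real

/-!
On a circle `|ζ| = r > 1` with `|w| < r`, expand the Cauchy kernel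
`1 / (ζ - w) = ∑ wᵏ ζ^(-k-1)` and `e^(tζ/(1-ζ)) = e^(-t) ∑ tⁿ (1-ζ)^(-n) / n!`, and integrate
term by term. The coefficient of `e^(-t) tⁿ wᵏ` is a multiple of `∮ (1-ζ)^(-x-n) ζ^(j-1-k) dζ`,
which does not depend on `r > 1`. Both expansions truncate for the same reason: a function that
is holomorphic on `|ζ| > 1` and `O(|ζ|⁻²)` at infinity has zero integral over each such circle,
because the integral does not change with the radius and is `O(1/R)` on the circle of radius `R`.
-/

open Filter Metric Asymptotics Bornology Topology Nat

theorem HasSum.eq_sum_range {α : Type*} [AddCommMonoid α] [TopologicalSpace α] [T2Space α]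
    {f : ℕ → α} {a : α} {N : ℕ} (h : HasSum f a) (hf : ∀ n, N ≤ n → f n = 0) :
    a = ∑ n ∈ Finset.range N, f n :=
  h.unique (hasSum_sum_of_ne_finset_zero fun n hn => hf n (by simpa using hn))

section CircleIntegral

variable {E : Type*} [NormedAddCommGroup E] [NormedSpace ℂ E]

theorem circleIntegral_eq_of_differentiableOn_norm_gt {f : ℂ → E} {R₀ r s : ℝ} (hR₀ : 0 ≤ R₀)
    (hr : R₀ < r) (hs : R₀ < s) (hf : DifferentiableOn ℂ f {z | R₀ < ‖z‖}) :
    ∮ z in C(0, r), f z = ∮ z in C(0, s), f z := by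
  wlog hrs : r ≤ s generalizing r s
  · exact (this hs hr (le_of_not_ge hrs)).symm
  have hopen : IsOpen {z : ℂ | R₀ < ‖z‖} := isOpen_lt continuous_const continuous_norm
  have hsub : closedBall (0 : ℂ) s \ ball 0 r ⊆ {z | R₀ < ‖z‖} := fun z hz =>
    hr.trans_le (by simpa using hz.2)
  refine (circleIntegral_eq_of_differentiable_on_annulus_off_countable (hR₀.trans_lt hr) hrs
    Set.countable_empty (hf.continuousOn.mono hsub) fun z hz => ?_).symm
  exact hf.differentiableAt (hopen.mem_nhds (hr.trans (by simpa using hz.1.2)))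

theorem circleIntegral_eq_zero_of_isBigO_cobounded {f : ℂ → E} {R₀ r : ℝ} (hR₀ : 0 ≤ R₀)
    (hr : R₀ < r) (hf : DifferentiableOn ℂ f {z | R₀ < ‖z‖})
    (hO : f =O[cobounded ℂ] fun z => z ^ (-2 : ℤ)) :
    ∮ z in C(0, r), f z = 0 := by
  obtain ⟨C, hC⟩ := hO.bound
  obtain ⟨R₁, -, hR₁⟩ := hasBasis_cobounded_norm.eventually_iff.1 hC
  have key : ∀ R ≥ max r R₁, ‖∮ z in C(0, r), f z‖ ≤ 2 * π * C / R := by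
    intro R hR
    have hR0 : 0 < R := (hR₀.trans_lt hr).trans_le (le_of_max_le_left hR)
    rw [circleIntegral_eq_of_differentiableOn_norm_gt hR₀ hr
      (hr.trans_le (le_of_max_le_left hR)) hf]
    calc ‖∮ z in C(0, R), f z‖ ≤ 2 * π * R * (C * R ^ (-2 : ℤ)) :=
          circleIntegral.norm_integral_le_of_norm_le_const hR0.le fun z hz => by
            have hz : ‖z‖ = R := by simpa using hz
            simpa [hz, norm_zpow] using hR₁ (hz ▸ le_of_max_le_right hR : R₁ ≤ ‖z‖)
      _ = 2 * π * C / R := by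
          rw [zpow_neg, zpow_two]
          field_simp
  exact norm_le_zero_iff.mp (ge_of_tendsto (tendsto_const_nhds.div_atTop tendsto_id)
    (eventually_atTop.2 ⟨_, key⟩))

theorem hasSum_circleIntegral_of_norm_le {ι : Type*} [Countable ι] {F : ι → ℂ → E} {f : ℂ → E}
    {c : ℂ} {R : ℝ} {M : ι → ℝ} (hF : ∀ i, ContinuousOn (F i) (sphere c |R|))
    (hM : Summable M) (hFM : ∀ i, ∀ z ∈ sphere c |R|, ‖F i z‖ ≤ M i)
    (hf : ∀ z ∈ sphere c |R|, HasSum (fun i => F i z) (f z)) :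
    HasSum (fun i => ∮ z in C(c, R), F i z) (∮ z in C(c, R), f z) := by
  refine intervalIntegral.hasSum_integral_of_dominated_convergence (fun i _ => |R| * M i)
    (fun i => ?_) (fun i => .of_forall fun θ _ => ?_) (.of_forall fun θ _ => hM.mul_left _)
    intervalIntegrable_const
    (.of_forall fun θ _ => (hf _ (circleMap_mem_sphere' c R θ)).const_smul _)
  · simp only [deriv_circleMap]
    exact (by fun_prop : Continuous fun θ => circleMap 0 R θ * I).aestronglyMeasurable.smul
      (hF i).circleIntegrable'.def'.1
  · rw [norm_smul, deriv_circleMap, norm_mul, norm_I, mul_one, norm_circleMap_zero]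
    exact mul_le_mul_of_nonneg_left (hFM i _ (circleMap_mem_sphere' c R θ)) (abs_nonneg R)

theorem hasSum_circleIntegral_mul_exp {g h : ℂ → ℂ} {c : ℂ} {R : ℝ}
    (hg : ContinuousOn g (sphere c |R|)) (hh : ContinuousOn h (sphere c |R|)) :
    HasSum (fun n : ℕ => ∮ z in C(c, R), g z * (h z ^ n / n !))
      (∮ z in C(c, R), g z * exp (h z)) := by
  obtain ⟨K, hK⟩ := (isCompact_sphere c |R|).exists_bound_of_continuousOn hg
  obtain ⟨L, hL⟩ := (isCompact_sphere c |R|).exists_bound_of_continuousOn hh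
  refine hasSum_circleIntegral_of_norm_le (M := fun n => K * (L ^ n / n !))
    (fun n => hg.mul ((hh.pow n).div_const _)) ((Real.summable_pow_div_factorial L).mul_left K)
    (fun n z hz => ?_) (fun z _ => ?_)
  · rw [norm_mul, norm_div, norm_pow, Complex.norm_natCast]
    exact mul_le_mul (hK z hz) (by gcongr; exact hL z hz) (by positivity)
      ((norm_nonneg _).trans (hK z hz))
  · rw [exp_eq_exp_ℂ]
    exact (NormedSpace.expSeries_div_hasSum_exp (h z)).mul_left (g z)

end CircleIntegral

theorem ne_zero_and_one_sub_ne_zero {z : ℂ} (hz : 1 < ‖z‖) : z ≠ 0 ∧ 1 - z ≠ 0 := by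
  refine ⟨by rintro rfl; simp at hz; linarith, fun h => ?_⟩
  rw [← sub_eq_zero.1 h] at hz
  simp at hz

theorem isBigO_zpow_zpow_cobounded {m n : ℤ} (h : m ≤ n) :
    (fun z : ℂ => z ^ m) =O[cobounded ℂ] fun z => z ^ n :=
  IsBigO.of_bound 1 <| (eventually_cobounded_le_norm 1).mono fun z hz => by
    simpa [norm_zpow] using zpow_le_zpow_right₀ hz h

theorem tendsto_one_sub_div_self_cobounded :
    Tendsto (fun z : ℂ => (1 - z) / z) (cobounded ℂ) (𝓝 (-1)) := by
  have h := tendsto_inv₀_cobounded.sub_const (1 : ℂ)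
  rw [zero_sub] at h
  refine h.congr' ((eventually_ne_cobounded 0).mono fun z hz => ?_)
  simp only [sub_div, one_div, div_self hz]

theorem sphere_subset_one_lt_norm {r : ℝ} (hr : 1 < r) : sphere (0 : ℂ) r ⊆ {z | 1 < ‖z‖} :=
  fun z hz => by simpa [mem_sphere_zero_iff_norm.1 hz] using hr

noncomputable def contourMoment (m p : ℤ) (t : ℂ) (r : ℝ) : ℂ :=
  ∮ ζ in C(0, r), (1 - ζ) ^ m * exp (t * ζ / (1 - ζ)) * ζ ^ p

theorem isBigO_contourMoment_integrand (m p : ℤ) (t : ℂ) :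
    (fun z : ℂ => (1 - z) ^ m * exp (t * z / (1 - z)) * z ^ p) =O[cobounded ℂ]
      fun z => z ^ (m + p) := by
  have hlim : Tendsto (fun z : ℂ => ((1 - z) / z) ^ m * exp (t / ((1 - z) / z))) (cobounded ℂ)
      (𝓝 ((-1) ^ m * exp (t / -1))) :=
    (tendsto_one_sub_div_self_cobounded.zpow₀ m (Or.inl (by norm_num))).mul
      ((tendsto_const_nhds.div tendsto_one_sub_div_self_cobounded (by norm_num)).cexp)
  refine ((hlim.isBigO_one ℂ).mul (isBigO_refl (fun z : ℂ => z ^ (m + p)) _)).congr' ?_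
    (.of_forall fun z => one_mul _)
  filter_upwards [eventually_ne_cobounded 0, eventually_ne_cobounded 1] with z h0 h1
  have h1' : 1 - z ≠ 0 := sub_ne_zero.2 h1.symm
  rw [div_div_eq_mul_div, div_zpow, zpow_add₀ h0]
  field_simp

theorem differentiableOn_contourMoment_integrand (m p : ℤ) (t : ℂ) :
    DifferentiableOn ℂ (fun z : ℂ => (1 - z) ^ m * exp (t * z / (1 - z)) * z ^ p)
      {z | 1 < ‖z‖} := by
  intro z hz
  obtain ⟨h0, h1⟩ := ne_zero_and_one_sub_ne_zero hz
  fun_prop (disch := first | assumption | exact Or.inl ‹_›)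

theorem contourMoment_eq_of_one_lt (m p : ℤ) (t : ℂ) {r s : ℝ} (hr : 1 < r) (hs : 1 < s) :
    contourMoment m p t r = contourMoment m p t s :=
  circleIntegral_eq_of_differentiableOn_norm_gt zero_le_one hr hs
    (differentiableOn_contourMoment_integrand m p t)

theorem contourMoment_eq_zero {m p : ℤ} (t : ℂ) {r : ℝ} (hr : 1 < r) (hmp : m + p ≤ -2) :
    contourMoment m p t r = 0 :=
  circleIntegral_eq_zero_of_isBigO_cobounded zero_le_one hr
    (differentiableOn_contourMoment_integrand m p t)
    ((isBigO_contourMoment_integrand m p t).trans (isBigO_zpow_zpow_cobounded hmp))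

theorem hasSum_contourMoment (m p : ℤ) (t : ℂ) {r : ℝ} (hr : 1 < r) :
    HasSum (fun n : ℕ => exp (-t) * (t ^ n / n !) * contourMoment (m - n) p 0 r)
      (contourMoment m p t r) := by
  have hr0 : 0 ≤ r := zero_le_one.trans hr.le
  have hsphere : sphere (0 : ℂ) |r| ⊆ {z | 1 < ‖z‖} :=
    sphere_subset_one_lt_norm (hr.trans_le (le_abs_self r))
  have hg : ContinuousOn (fun z : ℂ => exp (-t) * ((1 - z) ^ m * z ^ p)) (sphere 0 |r|) :=
    fun z hz => by
      obtain ⟨h0, h1⟩ := ne_zero_and_one_sub_ne_zero (hsphere hz)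
      exact (by fun_prop (disch := first | assumption | exact Or.inl ‹_›) :
        ContinuousAt _ z).continuousWithinAt
  have hh : ContinuousOn (fun z : ℂ => t / (1 - z)) (sphere 0 |r|) := fun z hz => by
    obtain ⟨-, h1⟩ := ne_zero_and_one_sub_ne_zero (hsphere hz)
    exact (by fun_prop (disch := assumption) : ContinuousAt _ z).continuousWithinAt
  convert hasSum_circleIntegral_mul_exp hg hh using 1
  · funext n
    rw [contourMoment, ← circleIntegral.integral_const_mul]
    refine circleIntegral.integral_congr hr0 fun z hz => ?_
    obtain ⟨-, h1⟩ := ne_zero_and_one_sub_ne_zero (sphere_subset_one_lt_norm hr hz)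
    simp only [zero_mul, zero_div, Complex.exp_zero, mul_one, zpow_sub₀ h1, zpow_natCast, div_pow]
    field_simp
  · refine circleIntegral.integral_congr hr0 fun z hz => ?_
    obtain ⟨-, h1⟩ := ne_zero_and_one_sub_ne_zero (sphere_subset_one_lt_norm hr hz)
    have hexp : t * z / (1 - z) = -t + t / (1 - z) := by field_simp; ring
    simp only [hexp, Complex.exp_add]
    ring

theorem hasSum_circleIntegral_div_sub (m : ℤ) (j : ℕ) (t : ℂ) {w : ℂ} {r : ℝ} (hr : 1 < r)
    (hw : ‖w‖ < r) :
    HasSum (fun k : ℕ => w ^ k * contourMoment m (j - 1 - k) t r)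
      (∮ ζ in C(0, r), (1 - ζ) ^ m * exp (t * ζ / (1 - ζ)) * ζ ^ j / (ζ - w)) := by
  have hr0 : 0 ≤ r := zero_le_one.trans hr.le
  have hf : ContinuousOn (fun z : ℂ => (1 - z) ^ m * exp (t * z / (1 - z)) * z ^ (j : ℤ))
      (sphere 0 r) :=
    (differentiableOn_contourMoment_integrand m j t).continuousOn.mono
      (sphere_subset_one_lt_norm hr)
  have H := hasSum_two_pi_I_cauchyPowerSeries_integral (hf.circleIntegrable hr0) hw
  convert H using 1
  · rfl
  · funext k
    rw [contourMoment, ← circleIntegral.integral_const_mul]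
    refine circleIntegral.integral_congr hr0 fun z hz => ?_
    have h0 : z ≠ 0 := ne_zero_of_mem_sphere (by positivity) ⟨z, hz⟩
    simp only [smul_eq_mul, sub_zero, zpow_sub₀ h0, zpow_natCast, zpow_one, div_pow]
    field_simp
  · congr 1
    ext z
    simp only [zero_add, smul_eq_mul, zpow_natCast]
    ring

theorem stmt_17_general (τ : ℝ) (hτ : 0 < τ) (x : ℤ) (j : ℕ) :
    ∃ P : MvPolynomial (Fin 2) ℂ,
      ∀ r : ℝ, 1 < r → r < τ⁻¹ →
        ∀ (t : ℂ) (η : ℂ), ‖η‖ < r / τ →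
          (2 * ↑Real.pi * Complex.I)⁻¹ *
            (∮ ζ in C(0, r),
              (1 - ζ) ^ (-x) * Complex.exp (t * ζ / (1 - ζ)) * ζ ^ j / (ζ - ↑τ * η)) =
            Complex.exp (-t) * MvPolynomial.eval ![t, η] P := by
  set N := ((j : ℤ) - x + 1).toNat
  have hN : (j : ℤ) - x + 1 ≤ N := Int.self_le_toNat _
  refine ⟨∑ k ∈ Finset.range N, ∑ n ∈ Finset.range N,
    MvPolynomial.C ((2 * π * I)⁻¹ * (τ : ℂ) ^ k / n ! * contourMoment (-x - n) (j - 1 - k) 0 2) *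
      MvPolynomial.X 0 ^ n * MvPolynomial.X 1 ^ k, fun r hr _ t η hη => ?_⟩
  have hw : ‖(τ : ℂ) * η‖ < r := by
    rw [norm_mul, norm_real, Real.norm_of_nonneg hτ.le]
    exact (lt_div_iff₀' hτ).1 hη
  have hsum_k := (hasSum_circleIntegral_div_sub (-x) j t hr hw).eq_sum_range (N := N)
    fun k hk => by rw [contourMoment_eq_zero t hr (by omega), mul_zero]
  have hsum_n (k : ℕ) : contourMoment (-x) (j - 1 - k) t r = ∑ n ∈ Finset.range N,
      exp (-t) * (t ^ n / n !) * contourMoment (-x - n) (j - 1 - k) 0 2 := by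
    rw [(hasSum_contourMoment _ _ t hr).eq_sum_range (N := N)
      fun n hn => by rw [contourMoment_eq_zero 0 hr (by omega), mul_zero]]
    simp only [contourMoment_eq_of_one_lt _ _ _ hr one_lt_two]
  simp only [hsum_k, hsum_n, map_sum, map_mul, map_pow, MvPolynomial.eval_C, MvPolynomial.eval_X,
    Matrix.cons_val_zero, Matrix.cons_val_one, Finset.mul_sum]
  exact Finset.sum_congr rfl fun k _ => Finset.sum_congr rfl fun n _ => by ring

/-- The contour integral `(2πi)⁻¹∮_{|ζ|=r} (1-ζ)^{-x} e^{tζ/(1-ζ)} ζʲ/(ζ-τη) dζ`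
equals `e^{-t}` times a polynomial in `t` and `η` depending only on `τ, x, j`
(Tracy–Widom, proof of Lemma 3 in Theorem 1). -/
theorem stmt_17 (τ : ℝ) (hτ : 0 < τ) (hτ' : τ < 1) (x : ℤ) (j : ℕ) :
    ∃ P : MvPolynomial (Fin 2) ℂ,
      ∀ r : ℝ, 1 < r → r < τ⁻¹ →
        ∀ (t : ℂ) (η : ℂ), ‖η‖ < r / τ →
          (2 * ↑Real.pi * Complex.I)⁻¹ *
            (∮ ζ in C(0, r),
              (1 - ζ) ^ (-x) * Complex.exp (t * ζ / (1 - ζ)) * ζ ^ j / (ζ - ↑τ * η)) =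
            Complex.exp (-t) * MvPolynomial.eval ![t, η] P :=
  stmt_17_general τ hτ x j
end

section
/- Let σ ∈ ℝ with 0 < σ < 1. Set c₁ = −1 + 2·√σ, c₃ = σ^{−1/6}·(1 − √σ)^{5/3}, and ξ = −√σ/(1 − √σ), and define g : ℝ → ℝ by g(y) = c₁/(1 − y) + 1/(1 − y)² + σ/y. Then g(ξ) = 0, the derivative of g vanishes at ξ, and the second derivative of g at ξ equals −2·c₃³. -/
/-!
With `s = √σ` one has `σ = s²`, `ξ = -s/(1-s)` and `1 - ξ = 1/(1-s)`, so after computing the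
first two derivatives of `g` in closed form, all three claims become rational identities in `s`;
on the other side, the rpow exponents in `c₃³` combine to `c₃³ = (1-s)⁵/s`.
-/

open Real Filter Topology

theorem hasDerivAt_div_one_sub_pow (a : ℝ) (n : ℕ) {y : ℝ} (hy : y ≠ 1) :
    HasDerivAt (fun x => a / (1 - x) ^ n) (n * a / (1 - y) ^ (n + 1)) y := by
  have h1y : 1 - y ≠ 0 := sub_ne_zero.mpr hy.symm
  refine ((hasDerivAt_const y a).div (((hasDerivAt_id' y).const_sub 1).fun_pow n)
    (pow_ne_zero n h1y)).congr_deriv ?_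
  rcases n with _ | n
  · simp
  · simp only [Nat.add_sub_cancel]
    field_simp
    ring

theorem hasDerivAt_div_pow (a : ℝ) (n : ℕ) {y : ℝ} (hy : y ≠ 0) :
    HasDerivAt (fun x => a / x ^ n) (-(n * a) / y ^ (n + 1)) y := by
  refine ((hasDerivAt_const y a).div ((hasDerivAt_id' y).fun_pow n)
    (pow_ne_zero n hy)).congr_deriv ?_
  rcases n with _ | n
  · simp
  · simp only [Nat.add_sub_cancel]
    field_simp
    ring

section Phase

variable (a b c : ℝ)

theorem hasDerivAt_phase {y : ℝ} (hy₀ : y ≠ 0) (hy₁ : y ≠ 1) :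
    HasDerivAt (fun x => a / (1 - x) + b / (1 - x) ^ 2 + c / x)
      (a / (1 - y) ^ 2 + 2 * b / (1 - y) ^ 3 - c / y ^ 2) y := by
  have h := ((hasDerivAt_div_one_sub_pow a 1 hy₁).fun_add
    (hasDerivAt_div_one_sub_pow b 2 hy₁)).fun_add (hasDerivAt_div_pow c 1 hy₀)
  simp only [pow_one] at h
  exact h.congr_deriv (by push_cast; ring)

theorem hasDerivAt_phaseDeriv {y : ℝ} (hy₀ : y ≠ 0) (hy₁ : y ≠ 1) :
    HasDerivAt (fun x => a / (1 - x) ^ 2 + 2 * b / (1 - x) ^ 3 - c / x ^ 2)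
      (2 * a / (1 - y) ^ 3 + 6 * b / (1 - y) ^ 4 + 2 * c / y ^ 3) y := by
  have h := ((hasDerivAt_div_one_sub_pow a 2 hy₁).fun_add
    (hasDerivAt_div_one_sub_pow (2 * b) 3 hy₁)).fun_sub (hasDerivAt_div_pow c 2 hy₀)
  exact h.congr_deriv (by push_cast; ring)

theorem deriv_deriv_phase {y : ℝ} (hy₀ : y ≠ 0) (hy₁ : y ≠ 1) :
    deriv (deriv fun x => a / (1 - x) + b / (1 - x) ^ 2 + c / x) y =
      2 * a / (1 - y) ^ 3 + 6 * b / (1 - y) ^ 4 + 2 * c / y ^ 3 := by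
  have h : (deriv fun x => a / (1 - x) + b / (1 - x) ^ 2 + c / x) =ᶠ[𝓝 y]
      fun x => a / (1 - x) ^ 2 + 2 * b / (1 - x) ^ 3 - c / x ^ 2 := by
    filter_upwards [isOpen_ne.mem_nhds hy₀, isOpen_ne.mem_nhds hy₁] with x hx₀ hx₁
    exact (hasDerivAt_phase a b c hx₀ hx₁).deriv
  rw [h.deriv_eq, (hasDerivAt_phaseDeriv a b c hy₀ hy₁).deriv]

end Phase

theorem rpow_neg_one_sixth_mul_rpow_five_thirds_pow_three {σ t : ℝ} (hσ : 0 ≤ σ) (ht : 0 ≤ t) :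
    (σ ^ (-(1 / 6) : ℝ) * t ^ ((5 : ℝ) / 3)) ^ 3 = t ^ 5 / √σ := by
  calc (σ ^ (-(1 / 6) : ℝ) * t ^ ((5 : ℝ) / 3)) ^ 3
      = σ ^ (-(1 / 2) : ℝ) * t ^ ((5 : ℕ) : ℝ) := by
        rw [mul_pow, ← rpow_natCast, ← rpow_natCast (t ^ _), ← rpow_mul hσ, ← rpow_mul ht]
        norm_num
    _ = t ^ 5 / √σ := by
        rw [rpow_neg hσ, rpow_natCast, sqrt_eq_rpow]
        ring

theorem phase_identities_at_saddle {s σ ξ : ℝ} (hs₀ : s ≠ 0) (hs₁ : s ≠ 1) (hσ : σ = s ^ 2)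
    (hξ : ξ = -s / (1 - s)) :
    (-1 + 2 * s) / (1 - ξ) + 1 / (1 - ξ) ^ 2 + σ / ξ = 0 ∧
    (-1 + 2 * s) / (1 - ξ) ^ 2 + 2 * 1 / (1 - ξ) ^ 3 - σ / ξ ^ 2 = 0 ∧
    2 * (-1 + 2 * s) / (1 - ξ) ^ 3 + 6 * 1 / (1 - ξ) ^ 4 + 2 * σ / ξ ^ 3 =
      -2 * ((1 - s) ^ 5 / s) := by
  have h1s : 1 - s ≠ 0 := sub_ne_zero.mpr hs₁.symm
  have h1ξ : 1 - ξ = 1 / (1 - s) := by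
    rw [hξ]
    field_simp
    ring
  subst hσ hξ
  refine ⟨?_, ?_, ?_⟩ <;>
  · rw [h1ξ]
    field_simp
    ring

/-- The saddle point `ξ` is a double critical point of the phase, with
`g(ξ) = g'(ξ) = 0` and `g''(ξ) = -2c₃³` (Tracy–Widom, Theorem 3). -/
theorem stmt_18 (σ : ℝ) (hσ : 0 < σ) (hσ1 : σ < 1)
    (c₁ c₃ ξ : ℝ)
    (hc₁ : c₁ = -1 + 2 * Real.sqrt σ)
    (hc₃ : c₃ = σ ^ (-(1 / 6) : ℝ) * (1 - Real.sqrt σ) ^ ((5 : ℝ) / 3))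
    (hξ : ξ = -Real.sqrt σ / (1 - Real.sqrt σ))
    (g : ℝ → ℝ)
    (hg : ∀ y : ℝ, g y = c₁ / (1 - y) + 1 / (1 - y) ^ 2 + σ / y) :
    g ξ = 0 ∧ deriv g ξ = 0 ∧ deriv (deriv g) ξ = -2 * c₃ ^ 3 := by
  obtain rfl : g = fun y => c₁ / (1 - y) + 1 / (1 - y) ^ 2 + σ / y := funext hg
  have hs_pos : 0 < √σ := sqrt_pos.mpr hσ
  have hs_lt_one : √σ < 1 := (sqrt_lt' one_pos).mpr (by rwa [one_pow])
  have hξ_neg : ξ < 0 :=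
    hξ ▸ div_neg_of_neg_of_pos (neg_neg_of_pos hs_pos) (sub_pos.mpr hs_lt_one)
  have hc₃' : c₃ ^ 3 = (1 - √σ) ^ 5 / √σ :=
    hc₃ ▸ rpow_neg_one_sixth_mul_rpow_five_thirds_pow_three hσ.le (sub_pos.mpr hs_lt_one).le
  obtain ⟨h₀, h₁, h₂⟩ :=
    phase_identities_at_saddle hs_pos.ne' hs_lt_one.ne (sq_sqrt hσ.le).symm hξ
  subst hc₁
  refine ⟨h₀, (hasDerivAt_phase _ _ _ hξ_neg.ne (by linarith)).deriv.trans h₁, ?_⟩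
  rw [deriv_deriv_phase _ _ _ hξ_neg.ne (by linarith), h₂, hc₃']
end

section
/- Let σ, s ∈ ℝ with 0 < σ < 1. Set c₁ = −1 + 2√σ, c₂ = σ^{−1/6}(1 − √σ)^{2/3}, c₃ = σ^{−1/6}(1 − √σ)^{5/3}, and ξ = −√σ/(1 − √σ). For real t > 0 put x(t) = c₁·t + c₂·s·t^{1/3} and m(t) = σ·t, and define ψ_t : ℂ → ℂ by ψ_t(w) = −x(t)·Log((1 − w)/(1 − ξ)) + t·(w/(1 − w) − ξ/(1 − ξ)) + m(t)·Log(w/ξ), where Log is the principal complex logarithm. Then for every ζ ∈ ℂ, ψ_t(ξ + c₃⁻¹·t^{−1/3}·ζ) → −ζ³/3 + s·ζ as t → ∞. -/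
/-!
Put `r = √σ` and `a = 1 - r`, so that `ξ = -r/a` and `1 - ξ = 1/a`. At `w = ξ + ε` the phase splits as
`ψ_t(ξ + ε) = t Φ(ε) - c₂ s t^{1/3} log (1 - aε)` with `Φ = saddlePhase r` independent of `t`.
The choice `c₁ = 2r - 1` kills the Taylor coefficients of `Φ` of orders one and two (the saddle point
is double), so `Φ(ε) = -a⁵ε³/(3r) + O(ε⁴)`, while `-log (1 - aε) = aε + O(ε²)`. For `ε = c₃⁻¹ t^{-1/3} ζ`
the error terms are `O(t^{-1/3})`, and `c₃³ r = a⁵`, `c₂ a = c₃` turn the main terms into `-ζ³/3` and `sζ`.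
-/

open Complex Real Filter
open Asymptotics Topology

noncomputable def saddlePhase (r z : ℂ) : ℂ :=
  -(2 * r - 1) * Complex.log (1 - (1 - r) * z) + (1 - r) ^ 2 * z / (1 - (1 - r) * z)
    + r ^ 2 * Complex.log (1 - (1 - r) / r * z)

lemma isBigO_comp_const_mul {F : ℂ → ℂ} {n : ℕ} (hF : F =O[𝓝 0] fun z => z ^ n) (b : ℂ) :
    (fun z => F (b * z)) =O[𝓝 0] fun z => z ^ n := by
  refine (hF.comp_tendsto ((continuous_const_mul b).tendsto' 0 0 (mul_zero b))).trans ?_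
  simp only [Function.comp_def, mul_pow]
  exact (isBigO_refl _ _).const_mul_left _

lemma tendsto_div_pow_of_isBigO {α : Type*} {l : Filter α} {F : ℂ → ℂ} {n : ℕ}
    (hF : F =O[𝓝 0] fun z => z ^ (n + 1)) {u : α → ℂ} (hu : Tendsto u l (𝓝 0)) :
    Tendsto (fun a => F (u a) / u a ^ n) l (𝓝 0) := by
  have hO : (fun a => F (u a) / u a ^ n) =O[l] u := by
    refine ((hF.comp_tendsto hu).mul (isBigO_refl (fun a => (u a ^ n)⁻¹) l)).congr
      (fun a => (div_eq_mul_inv _ _).symm) fun a => ?_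
    rcases eq_or_ne (u a) 0 with h | h
    · simp [h]
    · simp only [Function.comp_apply]
      field_simp
      ring
  exact hO.trans_tendsto hu

lemma tendsto_comp_mul_div_pow_of_isBigO_sub {α : Type*} {l : Filter α} {F : ℂ → ℂ} {κ : ℂ}
    {n : ℕ} (hF : (fun z => F z - κ * z ^ n) =O[𝓝 0] fun z => z ^ (n + 1)) {u : α → ℂ}
    (hu : Tendsto u l (𝓝 0)) (hu0 : ∀ᶠ a in l, u a ≠ 0) (c : ℂ) :
    Tendsto (fun a => F (c * u a) / u a ^ n) l (𝓝 (κ * c ^ n)) := by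
  have h := (tendsto_div_pow_of_isBigO (isBigO_comp_const_mul hF c) hu).add_const (κ * c ^ n)
  rw [zero_add] at h
  refine h.congr' ?_
  filter_upwards [hu0] with a ha
  field_simp
  ring

lemma saddlePhase_sub_cubic_isBigO {r : ℂ} (hr : r ≠ 0) :
    (fun z => saddlePhase r z - -(1 - r) ^ 5 / (3 * r) * z ^ 3) =O[𝓝 0] fun z => z ^ 4 := by
  have hlog := Complex.log_sub_logTaylor_isBigO 3
  have h₁ := isBigO_comp_const_mul hlog (-(1 - r))
  have h₂ := isBigO_comp_const_mul hlog (-((1 - r) / r))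
  have hden : Tendsto (fun z : ℂ => 1 - (1 - r) * z) (𝓝 0) (𝓝 1) :=
    (by fun_prop : Continuous fun z : ℂ => 1 - (1 - r) * z).tendsto' 0 1 (by simp)
  -- `a²z/(1 - az) = a²z + a³z² + a⁴z³ + a⁵z⁴/(1 - az)` with `a = 1 - r`
  have hgeom : (fun z : ℂ => z ^ 4 * ((1 - r) ^ 5 / (1 - (1 - r) * z))) =O[𝓝 0] fun z => z ^ 4 :=
    ((isBigO_refl _ _).mul ((tendsto_const_nhds.div hden one_ne_zero).isBigO_one ℂ)).congr_right
      fun z => mul_one _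
  refine (((h₁.const_mul_left (-(2 * r - 1))).add (h₂.const_mul_left (r ^ 2))).add hgeom).congr'
    ?_ EventuallyEq.rfl
  filter_upwards [hden.eventually_ne one_ne_zero] with z hz
  simp only [saddlePhase, Complex.logTaylor_succ, Complex.logTaylor_zero, Pi.add_apply, neg_mul,
    ← sub_eq_add_neg]
  generalize Complex.log (1 - (1 - r) * z) = L₁
  generalize Complex.log (1 - (1 - r) / r * z) = L₂
  field_simp
  ring

lemma tendsto_saddlePhase_scaling {α : Type*} {l : Filter α} {r c₂ c₃ : ℂ} (hr : r ≠ 0)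
    (hc₃ : c₃ ≠ 0) (hlin : c₂ * (1 - r) = c₃) (hcube : c₃ ^ 3 * r = (1 - r) ^ 5) (s ζ : ℂ)
    {u : α → ℂ} (hu : Tendsto u l (𝓝 0)) (hu0 : ∀ᶠ a in l, u a ≠ 0) :
    Tendsto (fun a => saddlePhase r (c₃⁻¹ * ζ * u a) / u a ^ 3
        + c₂ * s * (-Complex.log (1 - (1 - r) * (c₃⁻¹ * ζ * u a)) / u a ^ 1)) l
      (𝓝 (-ζ ^ 3 / 3 + s * ζ)) := by
  have hlog : (fun z => -Complex.log (1 - (1 - r) * z) - (1 - r) * z ^ 1) =O[𝓝 0]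
      fun z => z ^ (1 + 1) := by
    refine (isBigO_comp_const_mul Complex.log_sub_self_isBigO (-(1 - r))).neg_left.congr
      (fun z => ?_) fun z => rfl
    simp only [neg_mul, ← sub_eq_add_neg]
    ring
  convert (tendsto_comp_mul_div_pow_of_isBigO_sub (saddlePhase_sub_cubic_isBigO hr) hu hu0
    (c₃⁻¹ * ζ)).add ((tendsto_comp_mul_div_pow_of_isBigO_sub hlog hu hu0 (c₃⁻¹ * ζ)).const_mul
      (c₂ * s)) using 2
  field_simp
  linear_combination (-ζ ^ 3) * hcube - 3 * s * r * ζ * c₃ ^ 2 * hlin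

lemma phase_eq_saddlePhase {r ξ ε : ℂ} (hr : r ≠ 0) (hr1 : r ≠ 1) (hξ : ξ = -r / (1 - r))
    (hε : 1 - (1 - r) * ε ≠ 0) (T c : ℂ) :
    -((2 * r - 1) * T + c) * Complex.log ((1 - (ξ + ε)) / (1 - ξ))
        + T * ((ξ + ε) / (1 - (ξ + ε)) - ξ / (1 - ξ)) + r ^ 2 * T * Complex.log ((ξ + ε) / ξ)
      = T * saddlePhase r ε + c * -Complex.log (1 - (1 - r) * ε) := by
  have h1r : 1 - r ≠ 0 := sub_ne_zero.2 hr1.symm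
  have hsub : 1 - (ξ + ε) = (1 - (1 - r) * ε) / (1 - r) := by
    subst hξ; field_simp; ring
  have h₁ : (1 - (ξ + ε)) / (1 - ξ) = 1 - (1 - r) * ε := by
    rw [hsub, hξ]; field_simp; ring
  have h₂ : (ξ + ε) / ξ = 1 - (1 - r) / r * ε := by
    subst hξ; field_simp; ring
  have h₃ : (ξ + ε) / (1 - (ξ + ε)) - ξ / (1 - ξ) = (1 - r) ^ 2 * ε / (1 - (1 - r) * ε) := by
    rw [hsub, hξ]; field_simp; ring
  rw [h₁, h₂, h₃, saddlePhase]
  ring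

lemma saddle_scale_constants {σ c₂ c₃ : ℝ} (hσ : 0 < σ) (hσ1 : σ < 1)
    (hc₂ : c₂ = σ ^ (-(1 / 6) : ℝ) * (1 - √σ) ^ ((2 : ℝ) / 3))
    (hc₃ : c₃ = σ ^ (-(1 / 6) : ℝ) * (1 - √σ) ^ ((5 : ℝ) / 3)) :
    c₂ * (1 - √σ) = c₃ ∧ c₃ ^ 3 * √σ = (1 - √σ) ^ 5 := by
  have hb : 0 ≤ 1 - √σ := by linarith [(Real.sqrt_lt' one_pos).2 (by simpa using hσ1)]
  constructor
  · rw [hc₂, hc₃, mul_assoc, ← Real.rpow_add_one' hb (by norm_num)]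
    norm_num
  · rw [hc₃, mul_pow, ← Real.rpow_natCast, ← Real.rpow_natCast (_ ^ _), ← Real.rpow_mul hσ.le,
      ← Real.rpow_mul hb, Real.sqrt_eq_rpow, mul_right_comm, ← Real.rpow_add hσ]
    norm_num

lemma ofReal_rpow_neg_one_third_pow_three {t : ℝ} (ht : 0 < t) :
    ((t ^ (-(1 / 3) : ℝ) : ℝ) : ℂ) ^ 3 = (t : ℂ)⁻¹ := by
  rw [← Complex.ofReal_pow, ← Real.rpow_natCast, ← Real.rpow_mul ht.le, ← Complex.ofReal_inv,
    ← Real.rpow_neg_one]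
  norm_num

/-- Cubic scaling limit of the phase at the coalescing saddle point
(Tracy–Widom, proof of Theorem 3):
`ψ_t(ξ + c₃⁻¹ t^{-1/3} ζ) → -ζ³/3 + sζ` as `t → ∞`. -/
theorem stmt_19 (σ s : ℝ) (hσ : 0 < σ) (hσ1 : σ < 1)
    (c₁ c₂ c₃ ξ : ℝ)
    (hc₁ : c₁ = -1 + 2 * Real.sqrt σ)
    (hc₂ : c₂ = σ ^ (-(1 / 6) : ℝ) * (1 - Real.sqrt σ) ^ ((2 : ℝ) / 3))
    (hc₃ : c₃ = σ ^ (-(1 / 6) : ℝ) * (1 - Real.sqrt σ) ^ ((5 : ℝ) / 3))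
    (hξ : ξ = -Real.sqrt σ / (1 - Real.sqrt σ))
    (x m : ℝ → ℝ)
    (hx : ∀ t : ℝ, x t = c₁ * t + c₂ * s * t ^ ((1 : ℝ) / 3))
    (hm : ∀ t : ℝ, m t = σ * t)
    (ψ : ℝ → ℂ → ℂ)
    (hψ : ∀ (t : ℝ) (w : ℂ),
      ψ t w = -(x t : ℂ) * Complex.log ((1 - w) / (1 - (ξ : ℂ))) +
        (t : ℂ) * (w / (1 - w) - (ξ : ℂ) / (1 - (ξ : ℂ))) +
        (m t : ℂ) * Complex.log (w / (ξ : ℂ)))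
    (ζ : ℂ) :
    Tendsto (fun t : ℝ => ψ t ((ξ : ℂ) + ((c₃ : ℂ))⁻¹ * ((t ^ (-(1 / 3) : ℝ) : ℝ) : ℂ) * ζ))
      atTop (nhds (-ζ ^ 3 / 3 + (s : ℂ) * ζ)) := by
  obtain ⟨hlin, hcube⟩ := saddle_scale_constants hσ hσ1 hc₂ hc₃
  set r := √σ
  have hr0 : 0 < r := Real.sqrt_pos.2 hσ
  have hr1 : r < 1 := (Real.sqrt_lt' one_pos).2 (by simpa using hσ1)
  have hc₃0 : c₃ ≠ 0 := by rintro rfl; nlinarith [pow_pos (sub_pos.2 hr1) 5]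
  set u : ℝ → ℂ := fun t => ((t ^ (-(1 / 3) : ℝ) : ℝ) : ℂ)
  have hu : Tendsto u atTop (𝓝 0) :=
    (continuous_ofReal.tendsto' 0 0 ofReal_zero).comp (tendsto_rpow_neg_atTop (by norm_num))
  have hu0 : ∀ᶠ t in atTop, u t ≠ 0 := (eventually_gt_atTop 0).mono fun t ht =>
    ofReal_ne_zero.2 (Real.rpow_pos_of_pos ht _).ne'
  have hden : ∀ᶠ t in atTop, 1 - (1 - r) * ((c₃ : ℂ)⁻¹ * ζ * u t) ≠ 0 :=
    (((by fun_prop : Continuous fun z : ℂ => 1 - (1 - r) * ((c₃ : ℂ)⁻¹ * ζ * z)).tendsto' 0 1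
      (by simp)).comp hu).eventually_ne one_ne_zero
  refine (tendsto_saddlePhase_scaling (c₂ := c₂) (ofReal_ne_zero.2 hr0.ne')
    (ofReal_ne_zero.2 hc₃0) (by exact_mod_cast hlin) (by exact_mod_cast hcube) s ζ hu hu0).congr' ?_
  filter_upwards [eventually_gt_atTop 0, hden] with t ht hεt
  have hX : ((x t : ℝ) : ℂ) = (2 * r - 1) * t + c₂ * s * (u t)⁻¹ := by
    rw [hx, hc₁, ← inv_inv (t ^ _), ← Real.rpow_neg ht.le]
    push_cast
    ring
  have hM : ((m t : ℝ) : ℂ) = r ^ 2 * t := by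
    rw [hm, show σ = r ^ 2 from (Real.sq_sqrt hσ.le).symm]
    push_cast
    ring
  rw [hψ, hX, hM, mul_right_comm _ (u t) ζ, phase_eq_saddlePhase (ofReal_ne_zero.2 hr0.ne')
    (by exact_mod_cast hr1.ne) (by rw [hξ]; push_cast; ring) hεt,
    ← inv_inv (t : ℂ), ← ofReal_rpow_neg_one_third_pow_three ht]
  ring
end
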